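/- arXiv:2005.03882 — 9 statements merged into one kernel-verified Lean document; each statement's English description precedes it below -/
import Mathlib

section
/- Suppose u : ℝ → ℝ is locally absolutely continuous with derivative u_x, F : ℝ → ℝ is nondecreasing with 0 ≤ F(x) ≤ F_∞ for all x ∈ ℝ, and ∫_a^b u_x(z)² dz ≤ F(b) − F(a) for all a ≤ b. Let u_p = P_{Δx}u be the piecewise linear projection of u on the grid of mesh Δx > 0. Then u − u_p ∈ L²(ℝ) and ‖u − u_p‖_{L²(ℝ)} ≤ √F_∞ · Δx. -/
open MeasureTheory intervalIntegral

/-- Piecewise linear projection on the grid of mesh `dx`: the unique function equal to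
`f (j * dx)` at every grid point `j * dx` (`j ∈ ℤ`) and affine on each cell
`[j * dx, (j+1) * dx]`. -/
noncomputable def plProj (dx : ℝ) (f : ℝ → ℝ) : ℝ → ℝ := fun x =>
  f ((⌊x / dx⌋ : ℝ) * dx) +
    ((x - (⌊x / dx⌋ : ℝ) * dx) / dx) *
      (f (((⌊x / dx⌋ : ℝ) + 1) * dx) - f ((⌊x / dx⌋ : ℝ) * dx))

/-! On a cell `[a, b]` of the grid write `x = a + θ (b - a)`. Then
`u x - P u x = (1 - θ) (u x - u a) - θ (u b - u x)`, and convexity of the square followed by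
Cauchy–Schwarz on `[a, x]` and `[x, b]` gives `(u x - P u x) ^ 2 ≤ Δx ∫_a^b u_x ^ 2`. Integrating
over the cell and summing over all cells bounds `‖u - P u‖₂ ^ 2` by `Δx ^ 2 ∫_ℝ u_x ^ 2`, and the
energy bound makes the last integral at most `F_∞`. -/

open Set Function

lemma sq_intervalIntegral_le_mul_intervalIntegral_sq {f : ℝ → ℝ} {a b : ℝ} (hab : a ≤ b)
    (hf : IntervalIntegrable f volume a b)
    (hf2 : IntervalIntegrable (fun z => f z ^ 2) volume a b) :
    (∫ z in a..b, f z) ^ 2 ≤ (b - a) * ∫ z in a..b, f z ^ 2 := by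
  rcases hab.eq_or_lt with rfl | hlt
  · simp
  set I := ∫ z in a..b, f z
  set J := ∫ z in a..b, f z ^ 2
  have hvar : 0 ≤ ∫ z in a..b, ((b - a) * f z - I) ^ 2 :=
    integral_nonneg hab fun z _ => sq_nonneg _
  have hexpand : ∫ z in a..b, ((b - a) * f z - I) ^ 2 = (b - a) * ((b - a) * J - I ^ 2) := by
    have hlin : IntervalIntegrable (fun z => 2 * (b - a) * I * f z) volume a b := hf.const_mul _
    have hquad : IntervalIntegrable (fun z => (b - a) ^ 2 * f z ^ 2) volume a b := hf2.const_mul _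
    simp_rw [show ∀ z, ((b - a) * f z - I) ^ 2
        = (b - a) ^ 2 * f z ^ 2 - 2 * (b - a) * I * f z + I ^ 2 from fun z => by ring]
    rw [intervalIntegral.integral_add (hquad.sub hlin) intervalIntegrable_const,
      intervalIntegral.integral_sub hquad hlin, intervalIntegral.integral_const_mul,
      intervalIntegral.integral_const_mul,
      intervalIntegral.integral_const, smul_eq_mul]
    ring
  have hcs : 0 ≤ (b - a) * J - I ^ 2 :=
    (mul_nonneg_iff_of_pos_left (sub_pos.2 hlt)).1 (hexpand ▸ hvar)
  linarith

lemma sq_sub_lineInterp_le {u g : ℝ → ℝ} {a b x : ℝ} (hab : a < b) (hax : a ≤ x) (hxb : x ≤ b)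
    (hg : IntervalIntegrable g volume a b)
    (hg2 : IntervalIntegrable (fun z => g z ^ 2) volume a b)
    (hua : u x - u a = ∫ z in a..x, g z) (hub : u b - u x = ∫ z in x..b, g z) :
    (u x - (u a + (x - a) / (b - a) * (u b - u a))) ^ 2 ≤ (b - a) * ∫ z in a..b, g z ^ 2 := by
  have hsub_ax : uIcc a x ⊆ uIcc a b := uIcc_subset_uIcc left_mem_uIcc (mem_uIcc_of_le hax hxb)
  have hsub_xb : uIcc x b ⊆ uIcc a b := uIcc_subset_uIcc (mem_uIcc_of_le hax hxb) right_mem_uIcc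
  set L := b - a
  set θ := (x - a) / L
  set P := u x - u a
  set Q := u b - u x
  set J₁ := ∫ z in a..x, g z ^ 2
  set J₂ := ∫ z in x..b, g z ^ 2
  have hL : 0 < L := sub_pos.2 hab
  have hθx : x - a = θ * L := (div_mul_cancel₀ _ hL.ne').symm
  have hθ0 : 0 ≤ θ := div_nonneg (sub_nonneg.2 hax) hL.le
  have hθ1 : θ ≤ 1 := (div_le_one hL).2 (by linarith)
  have hP : P ^ 2 ≤ θ * L * J₁ := by
    rw [hua, ← hθx]
    exact sq_intervalIntegral_le_mul_intervalIntegral_sq hax (hg.mono_set hsub_ax)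
      (hg2.mono_set hsub_ax)
  have hQ : Q ^ 2 ≤ (1 - θ) * L * J₂ := by
    rw [hub, show (1 - θ) * L = b - x by linarith]
    exact sq_intervalIntegral_le_mul_intervalIntegral_sq hxb (hg.mono_set hsub_xb)
      (hg2.mono_set hsub_xb)
  have hJ : J₁ + J₂ = ∫ z in a..b, g z ^ 2 :=
    integral_add_adjacent_intervals (hg2.mono_set hsub_ax) (hg2.mono_set hsub_xb)
  have hJ₁ : 0 ≤ J₁ := integral_nonneg hax fun z _ => sq_nonneg _
  have hJ₂ : 0 ≤ J₂ := integral_nonneg hxb fun z _ => sq_nonneg _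
  have hθ1' : 0 ≤ 1 - θ := sub_nonneg.2 hθ1
  have hinterp : u x - (u a + θ * (u b - u a)) = (1 - θ) * P - θ * Q := by ring
  have hconvex : ((1 - θ) * P - θ * Q) ^ 2 ≤ (1 - θ) * P ^ 2 + θ * Q ^ 2 := by
    have hgap : (1 - θ) * P ^ 2 + θ * Q ^ 2 - ((1 - θ) * P - θ * Q) ^ 2
        = θ * (1 - θ) * (P + Q) ^ 2 := by ring
    linarith [mul_nonneg (mul_nonneg hθ0 hθ1') (sq_nonneg (P + Q))]
  rw [hinterp, ← hJ]
  calc ((1 - θ) * P - θ * Q) ^ 2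
      ≤ (1 - θ) * P ^ 2 + θ * Q ^ 2 := hconvex
    _ ≤ (1 - θ) * (θ * L * J₁) + θ * ((1 - θ) * L * J₂) := by gcongr
    _ = θ * (1 - θ) * (L * (J₁ + J₂)) := by ring
    _ ≤ L * (J₁ + J₂) :=
      mul_le_of_le_one_left (by positivity) (by nlinarith)

lemma floor_div_eq_of_mem_Ico {dx x : ℝ} {j : ℤ} (hdx : 0 < dx)
    (hx : x ∈ Ico (j * dx) ((j + 1) * dx)) : ⌊x / dx⌋ = j := by
  rw [Int.floor_eq_iff, le_div_iff₀ hdx, div_lt_iff₀ hdx]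
  exact hx

lemma plProj_eq_of_mem_Ico {dx x : ℝ} {j : ℤ} (f : ℝ → ℝ) (hdx : 0 < dx)
    (hx : x ∈ Ico (j * dx) ((j + 1) * dx)) :
    plProj dx f x = f (j * dx) + (x - j * dx) / dx * (f ((j + 1) * dx) - f (j * dx)) := by
  rw [plProj, floor_div_eq_of_mem_Ico hdx hx]

lemma sq_sub_plProj_le {u g : ℝ → ℝ} {dx x : ℝ} {j : ℤ} (hdx : 0 < dx)
    (hg : ∀ a b, IntervalIntegrable g volume a b)
    (hg2 : ∀ a b, IntervalIntegrable (fun z => g z ^ 2) volume a b)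
    (hu : ∀ a b, a ≤ b → u b - u a = ∫ z in a..b, g z)
    (hx : x ∈ Ico (j * dx) ((j + 1) * dx)) :
    (u x - plProj dx u x) ^ 2 ≤ dx * ∫ z in j * dx..(j + 1) * dx, g z ^ 2 := by
  have hcell : (j + 1) * dx - j * dx = dx := by ring
  have h := sq_sub_lineInterp_le (u := u) (by linarith) hx.1 hx.2.le (hg _ _) (hg2 _ _)
    (hu _ _ hx.1) (hu _ _ hx.2.le)
  rwa [hcell, ← plProj_eq_of_mem_Ico u hdx hx] at h

lemma lintegral_eq_tsum_setLIntegral_Ico (f : ℝ → ENNReal) {dx : ℝ} (hdx : 0 < dx) :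
    ∫⁻ x, f x = ∑' j : ℤ, ∫⁻ x in Ico (j * dx) ((j + 1) * dx), f x := by
  have hunion : ⋃ j : ℤ, Ico ((j : ℝ) * dx) ((j + 1) * dx) = univ := by
    simpa [zsmul_eq_mul] using iUnion_Ico_zsmul hdx
  have hdisj : Pairwise (Disjoint on fun j : ℤ => Ico ((j : ℝ) * dx) ((j + 1) * dx)) := by
    simpa [zsmul_eq_mul] using pairwise_disjoint_Ico_zsmul dx
  rw [← lintegral_iUnion (fun _ => measurableSet_Ico) hdisj, hunion, Measure.restrict_univ]

lemma setLIntegral_Ico_ofReal {g : ℝ → ℝ} {a b : ℝ} (hab : a ≤ b)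
    (hg : IntervalIntegrable g volume a b) (hg0 : ∀ x, 0 ≤ g x) :
    ∫⁻ x in Ico a b, ENNReal.ofReal (g x) = ENNReal.ofReal (∫ x in a..b, g x) := by
  rw [integral_of_le hab, ofReal_integral_eq_lintegral_ofReal
    ((intervalIntegrable_iff_integrableOn_Ioc_of_le hab).1 hg) (ae_of_all _ hg0),
    Measure.restrict_congr_set Ico_ae_eq_Ioc]

lemma lintegral_ofReal_le_of_intervalIntegral_le {g : ℝ → ℝ} {C : ℝ}
    (hg : ∀ a b, IntervalIntegrable g volume a b) (hg0 : ∀ x, 0 ≤ g x)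
    (hC : ∀ a b, a ≤ b → ∫ x in a..b, g x ≤ C) :
    ∫⁻ x, ENNReal.ofReal (g x) ≤ ENNReal.ofReal C := by
  have hmono : Monotone fun n : ℕ => Ico (-n : ℝ) n := fun m n hmn =>
    Ico_subset_Ico (by simpa using hmn) (by simpa using hmn)
  have hunion : ⋃ n : ℕ, Ico (-n : ℝ) n = univ := by
    refine eq_univ_of_forall fun x => mem_iUnion.2 ?_
    obtain ⟨n, hn⟩ := exists_nat_gt |x|
    exact ⟨n, by linarith [neg_abs_le x], by linarith [le_abs_self x]⟩
  rw [← setLIntegral_univ, ← hunion, setLIntegral_iUnion_of_directed _ hmono.directed_le]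
  refine iSup_le fun n => ?_
  have hn : (-n : ℝ) ≤ n := by simp
  rw [setLIntegral_Ico_ofReal hn (hg _ _) hg0]
  exact ENNReal.ofReal_le_ofReal (hC _ _ hn)

lemma setLIntegral_sq_sub_plProj_le {u g : ℝ → ℝ} {dx : ℝ} (hdx : 0 < dx)
    (hg : ∀ a b, IntervalIntegrable g volume a b)
    (hg2 : ∀ a b, IntervalIntegrable (fun z => g z ^ 2) volume a b)
    (hu : ∀ a b, a ≤ b → u b - u a = ∫ z in a..b, g z) (j : ℤ) :
    ∫⁻ x in Ico (j * dx) ((j + 1) * dx), ENNReal.ofReal ((u x - plProj dx u x) ^ 2) ≤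
      ENNReal.ofReal (dx ^ 2) *
        ∫⁻ x in Ico (j * dx) ((j + 1) * dx), ENNReal.ofReal (g x ^ 2) := by
  have hcell : (j : ℝ) * dx ≤ (j + 1) * dx := by linarith
  calc ∫⁻ x in Ico (j * dx) ((j + 1) * dx), ENNReal.ofReal ((u x - plProj dx u x) ^ 2)
      ≤ ∫⁻ _ in Ico (j * dx) ((j + 1) * dx),
          ENNReal.ofReal (dx * ∫ z in j * dx..(j + 1) * dx, g z ^ 2) :=
        setLIntegral_mono measurable_const fun x hx =>
          ENNReal.ofReal_le_ofReal (sq_sub_plProj_le hdx hg hg2 hu hx)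
    _ = ENNReal.ofReal (dx ^ 2) *
        ∫⁻ x in Ico (j * dx) ((j + 1) * dx), ENNReal.ofReal (g x ^ 2) := by
      rw [setLIntegral_const, setLIntegral_Ico_ofReal hcell (hg2 _ _) fun x => sq_nonneg _,
        Real.volume_Ico, show (j + 1) * dx - j * dx = dx by ring, ← ENNReal.ofReal_mul' hdx.le,
        ← ENNReal.ofReal_mul (sq_nonneg dx)]
      ring_nf

lemma lintegral_sq_sub_plProj_le {u g : ℝ → ℝ} {dx : ℝ} (hdx : 0 < dx)
    (hg : ∀ a b, IntervalIntegrable g volume a b)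
    (hg2 : ∀ a b, IntervalIntegrable (fun z => g z ^ 2) volume a b)
    (hu : ∀ a b, a ≤ b → u b - u a = ∫ z in a..b, g z) :
    ∫⁻ x, ENNReal.ofReal ((u x - plProj dx u x) ^ 2) ≤
      ENNReal.ofReal (dx ^ 2) * ∫⁻ x, ENNReal.ofReal (g x ^ 2) := by
  rw [lintegral_eq_tsum_setLIntegral_Ico _ hdx, lintegral_eq_tsum_setLIntegral_Ico _ hdx,
    ← ENNReal.tsum_mul_left]
  exact ENNReal.tsum_le_tsum (setLIntegral_sq_sub_plProj_le hdx hg hg2 hu)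

lemma eLpNorm_two_le_of_lintegral_sq_le {α : Type*} [MeasurableSpace α] {μ : Measure α}
    {f : α → ℝ} {C : ℝ} (hC : 0 ≤ C)
    (h : ∫⁻ x, ENNReal.ofReal (f x ^ 2) ∂μ ≤ ENNReal.ofReal (C ^ 2)) :
    eLpNorm f 2 μ ≤ ENNReal.ofReal C := by
  have hsq : ∀ x, ‖f x‖ₑ ^ (2 : ℝ) = ENNReal.ofReal (f x ^ 2) := fun x => by
    rw [ENNReal.rpow_two, Real.enorm_eq_ofReal_abs, ← ENNReal.ofReal_pow (abs_nonneg _), sq_abs]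
  rw [eLpNorm_eq_lintegral_rpow_enorm_toReal two_ne_zero ENNReal.ofNat_ne_top,
    ENNReal.toReal_ofNat]
  simp_rw [hsq]
  calc (∫⁻ x, ENNReal.ofReal (f x ^ 2) ∂μ) ^ (1 / (2 : ℝ))
      ≤ ENNReal.ofReal (C ^ 2) ^ (1 / (2 : ℝ)) := ENNReal.rpow_le_rpow h (by norm_num)
    _ = ENNReal.ofReal C := by
      rw [ENNReal.ofReal_rpow_of_nonneg (sq_nonneg C) (by norm_num), ← Real.sqrt_eq_rpow,
        Real.sqrt_sq hC]

lemma continuous_of_sub_eq_intervalIntegral {u g : ℝ → ℝ}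
    (hg : ∀ a b, IntervalIntegrable g volume a b)
    (hu : ∀ a b, a ≤ b → u b - u a = ∫ z in a..b, g z) : Continuous u := by
  have hprim : u = fun x => u 0 + ∫ z in (0 : ℝ)..x, g z := by
    funext x
    rcases le_total 0 x with hx | hx
    · linarith [hu 0 x hx]
    · linarith [hu x 0 hx, integral_symm (f := g) (μ := volume) 0 x]
  rw [hprim]
  exact continuous_const.add (continuous_primitive hg 0)

lemma Measurable.plProj {f : ℝ → ℝ} (hf : Measurable f) (dx : ℝ) : Measurable (plProj dx f) := by
  unfold _root_.plProj
  fun_prop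

theorem projection_estimate_u_L2_general
    (u ux F : ℝ → ℝ) (Finf : ℝ)
    (hF0 : ∀ x, 0 ≤ F x) (hFle : ∀ x, F x ≤ Finf)
    (hux_int : ∀ a b : ℝ, IntervalIntegrable ux volume a b)
    (hux2_int : ∀ a b : ℝ, IntervalIntegrable (fun z => ux z ^ 2) volume a b)
    (hFTC : ∀ a b : ℝ, a ≤ b → u b - u a = ∫ z in a..b, ux z)
    (hE : ∀ a b : ℝ, a ≤ b → (∫ z in a..b, ux z ^ 2) ≤ F b - F a)
    (dx : ℝ) (hdx : 0 < dx) :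
    MemLp (fun x => u x - plProj dx u x) 2 volume ∧
      eLpNorm (fun x => u x - plProj dx u x) 2 volume ≤
        ENNReal.ofReal (Real.sqrt Finf * dx) := by
  have hFinf : 0 ≤ Finf := (hF0 0).trans (hFle 0)
  have henergy : ∫⁻ x, ENNReal.ofReal (ux x ^ 2) ≤ ENNReal.ofReal Finf :=
    lintegral_ofReal_le_of_intervalIntegral_le hux2_int (fun x => sq_nonneg _)
      fun a b hab => (hE a b hab).trans (by linarith [hF0 a, hFle b])
  have hsq : ∫⁻ x, ENNReal.ofReal ((u x - plProj dx u x) ^ 2) ≤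
      ENNReal.ofReal ((Real.sqrt Finf * dx) ^ 2) :=
    calc ∫⁻ x, ENNReal.ofReal ((u x - plProj dx u x) ^ 2)
        ≤ ENNReal.ofReal (dx ^ 2) * ∫⁻ x, ENNReal.ofReal (ux x ^ 2) :=
          lintegral_sq_sub_plProj_le hdx hux_int hux2_int hFTC
      _ ≤ ENNReal.ofReal (dx ^ 2) * ENNReal.ofReal Finf := by gcongr
      _ = ENNReal.ofReal ((Real.sqrt Finf * dx) ^ 2) := by
          rw [← ENNReal.ofReal_mul (sq_nonneg dx), mul_pow, Real.sq_sqrt hFinf, mul_comm]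
  have hbound := eLpNorm_two_le_of_lintegral_sq_le (by positivity) hsq
  have hu : Measurable u := (continuous_of_sub_eq_intervalIntegral hux_int hFTC).measurable
  exact ⟨⟨(hu.sub (hu.plProj dx)).aestronglyMeasurable, hbound.trans_lt ENNReal.ofReal_lt_top⟩,
    hbound⟩

/-- Second projection estimate: `u - P_{Δx} u ∈ L²(ℝ)` and `‖u - P_{Δx} u‖_2 ≤ √F_∞ Δx`. -/
theorem projection_estimate_u_L2
    (u ux F : ℝ → ℝ) (Finf : ℝ) (hFinf : 0 < Finf)
    (hFmono : Monotone F)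
    (hF0 : ∀ x, 0 ≤ F x) (hFle : ∀ x, F x ≤ Finf)
    (hux_int : ∀ a b : ℝ, IntervalIntegrable ux volume a b)
    (hux2_int : ∀ a b : ℝ, IntervalIntegrable (fun z => ux z ^ 2) volume a b)
    (hFTC : ∀ a b : ℝ, a ≤ b → u b - u a = ∫ z in a..b, ux z)
    (hE : ∀ a b : ℝ, a ≤ b → (∫ z in a..b, ux z ^ 2) ≤ F b - F a)
    (dx : ℝ) (hdx : 0 < dx) :
    MemLp (fun x => u x - plProj dx u x) 2 volume ∧
      eLpNorm (fun x => u x - plProj dx u x) 2 volume ≤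
        ENNReal.ofReal (Real.sqrt Finf * dx) :=
  projection_estimate_u_L2_general u ux F Finf hF0 hFle hux_int hux2_int hFTC hE dx hdx
end

section
/- Suppose F : ℝ → ℝ is nondecreasing with 0 ≤ F(x) ≤ F_∞ for all x ∈ ℝ. Let F_p = P_{Δx}F be the piecewise linear projection of F on the grid of mesh Δx > 0. Then F − F_p ∈ L¹(ℝ) and ‖F − F_p‖_{L¹(ℝ)} ≤ F_∞ · Δx. -/
open MeasureTheory

section Cells

variable {dx : ℝ}

lemma floor_div_mul_le (hdx : 0 < dx) (x : ℝ) : (⌊x / dx⌋ : ℝ) * dx ≤ x :=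
  (le_div_iff₀ hdx).1 (Int.floor_le _)

lemma lt_floor_div_add_one_mul (hdx : 0 < dx) (x : ℝ) : x < ((⌊x / dx⌋ : ℝ) + 1) * dx :=
  (div_lt_iff₀ hdx).1 (Int.lt_floor_add_one _)

lemma measurable_floor_div : Measurable fun x : ℝ => ⌊x / dx⌋ :=
  Int.measurable_floor.comp (measurable_id.div_const dx)

lemma volume_preimage_floor_div (hdx : 0 < dx) (j : ℤ) :
    volume ((fun x : ℝ => ⌊x / dx⌋) ⁻¹' {j}) = ENNReal.ofReal dx := by
  have hpre :
      (fun x : ℝ => ⌊x / dx⌋) ⁻¹' {j} = (· * dx⁻¹) ⁻¹' (Int.floor ⁻¹' {j}) := by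
    ext x; simp only [Set.mem_preimage, div_eq_mul_inv]
  rw [hpre, Real.volume_preimage_mul_right (inv_ne_zero hdx.ne'), Int.preimage_floor_singleton,
    Real.volume_Ico, inv_inv, abs_of_pos hdx, add_sub_cancel_left, ENNReal.ofReal_one, mul_one]

lemma lintegral_comp_floor_div (hdx : 0 < dx) (g : ℤ → ENNReal) :
    ∫⁻ x, g ⌊x / dx⌋ = (∑' j, g j) * ENNReal.ofReal dx := by
  rw [← lintegral_map (measurable_of_countable g) measurable_floor_div, lintegral_countable',
    ← ENNReal.tsum_mul_right]
  congr 1 with j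
  rw [Measure.map_apply measurable_floor_div (measurableSet_singleton j),
    volume_preimage_floor_div hdx]

end Cells

lemma tsum_ofReal_sub_le_of_monotone {u : ℤ → ℝ} (hu : Monotone u) {lo hi : ℝ}
    (hlo : ∀ j, lo ≤ u j) (hhi : ∀ j, u j ≤ hi) :
    ∑' j, ENNReal.ofReal (u (j + 1) - u j) ≤ ENNReal.ofReal (hi - lo) := by
  have hcofinal : ∀ s : Finset ℤ, ∃ n : ℕ, s ⊆ Finset.Ico (-n : ℤ) n := fun s =>
    (Filter.tendsto_atTop.1 Finset.tendsto_Ico_neg s).exists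
  rw [ENNReal.tsum_eq_iSup_sum' _ hcofinal]
  refine iSup_le fun n => ?_
  rw [← ENNReal.ofReal_sum_of_nonneg fun j _ => sub_nonneg.2 (hu (Int.le_add_one le_rfl))]
  refine ENNReal.ofReal_le_ofReal ?_
  have htelescope := Finset.sum_Ico_int_sub n fun j => -u j
  simp only [neg_sub_neg] at htelescope
  linarith [hlo (-n), hhi n]

lemma measurable_plProj (dx : ℝ) (f : ℝ → ℝ) : Measurable (plProj dx f) := by
  have hleft : Measurable fun x : ℝ => f ((⌊x / dx⌋ : ℝ) * dx) :=
    (measurable_of_countable fun j : ℤ => f (j * dx)).comp measurable_floor_div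
  have hright : Measurable fun x : ℝ => f (((⌊x / dx⌋ : ℝ) + 1) * dx) :=
    (measurable_of_countable fun j : ℤ => f ((j + 1) * dx)).comp measurable_floor_div
  have hnode : Measurable fun x : ℝ => (⌊x / dx⌋ : ℝ) :=
    (measurable_of_countable fun j : ℤ => (j : ℝ)).comp measurable_floor_div
  exact hleft.add (((measurable_id.sub (hnode.mul_const dx)).div_const dx).mul
    (hright.sub hleft))

section Projection

variable {f : ℝ → ℝ} {dx : ℝ}

lemma plProj_mem_Icc (hf : Monotone f) (hdx : 0 < dx) (x : ℝ) :
    plProj dx f x ∈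
      Set.Icc (f ((⌊x / dx⌋ : ℝ) * dx)) (f (((⌊x / dx⌋ : ℝ) + 1) * dx)) := by
  have hleft := floor_div_mul_le hdx x
  have hright := lt_floor_div_add_one_mul hdx x
  have hincr : 0 ≤ f (((⌊x / dx⌋ : ℝ) + 1) * dx) - f ((⌊x / dx⌋ : ℝ) * dx) :=
    sub_nonneg.2 (hf (hleft.trans hright.le))
  have ht0 : 0 ≤ (x - (⌊x / dx⌋ : ℝ) * dx) / dx := div_nonneg (by linarith) hdx.le
  have ht1 : (x - (⌊x / dx⌋ : ℝ) * dx) / dx ≤ 1 := (div_le_one hdx).2 (by linarith)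
  constructor <;> simp only [plProj] <;>
    linarith [mul_nonneg ht0 hincr, mul_le_of_le_one_left hincr ht1]

lemma abs_sub_plProj_le (hf : Monotone f) (hdx : 0 < dx) (x : ℝ) :
    |f x - plProj dx f x| ≤ f (((⌊x / dx⌋ : ℝ) + 1) * dx) - f ((⌊x / dx⌋ : ℝ) * dx) :=
  Real.dist_le_of_mem_Icc ⟨hf (floor_div_mul_le hdx x), hf (lt_floor_div_add_one_mul hdx x).le⟩
    (plProj_mem_Icc hf hdx x)

theorem lintegral_enorm_sub_plProj_le (hf : Monotone f) {lo hi : ℝ} (hlo : ∀ x, lo ≤ f x)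
    (hhi : ∀ x, f x ≤ hi) (hdx : 0 < dx) :
    ∫⁻ x, ‖f x - plProj dx f x‖ₑ ≤ ENNReal.ofReal ((hi - lo) * dx) := by
  set u : ℤ → ℝ := fun j => f (j * dx)
  have hu : Monotone u := fun i j hij =>
    hf (mul_le_mul_of_nonneg_right (Int.cast_le.2 hij) hdx.le)
  calc ∫⁻ x, ‖f x - plProj dx f x‖ₑ
      ≤ ∫⁻ x, ENNReal.ofReal (u (⌊x / dx⌋ + 1) - u ⌊x / dx⌋) := by
        refine lintegral_mono fun x => ?_
        rw [← ofReal_norm, Real.norm_eq_abs]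
        refine ENNReal.ofReal_le_ofReal ?_
        simpa [u] using abs_sub_plProj_le hf hdx x
    _ = (∑' j, ENNReal.ofReal (u (j + 1) - u j)) * ENNReal.ofReal dx :=
        lintegral_comp_floor_div hdx fun j => ENNReal.ofReal (u (j + 1) - u j)
    _ ≤ ENNReal.ofReal (hi - lo) * ENNReal.ofReal dx := by
        gcongr
        exact tsum_ofReal_sub_le_of_monotone hu (fun j => hlo _) (fun j => hhi _)
    _ = ENNReal.ofReal ((hi - lo) * dx) :=
        (ENNReal.ofReal_mul (sub_nonneg.2 ((hlo 0).trans (hhi 0)))).symm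

end Projection

theorem projection_estimate_F_L1_general
    (F : ℝ → ℝ) (Finf : ℝ)
    (hFmono : Monotone F)
    (hF0 : ∀ x, 0 ≤ F x) (hFle : ∀ x, F x ≤ Finf)
    (dx : ℝ) (hdx : 0 < dx) :
    Integrable (fun x => F x - plProj dx F x) volume ∧
      (∫ x, |F x - plProj dx F x|) ≤ Finf * dx := by
  have hmeas : AEStronglyMeasurable (fun x => F x - plProj dx F x) volume :=
    (hFmono.measurable.sub (measurable_plProj dx F)).aestronglyMeasurable
  have hbound := lintegral_enorm_sub_plProj_le hFmono hF0 hFle hdx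
  rw [sub_zero] at hbound
  refine ⟨⟨hmeas, hbound.trans_lt ENNReal.ofReal_lt_top⟩, ?_⟩
  simp_rw [← Real.norm_eq_abs]
  rw [integral_norm_eq_lintegral_enorm hmeas]
  exact ENNReal.toReal_le_of_le_ofReal (mul_nonneg ((hF0 0).trans (hFle 0)) hdx.le) hbound

/-- Third projection estimate: `F - P_{Δx} F ∈ L¹(ℝ)` and `‖F - P_{Δx} F‖_1 ≤ F_∞ Δx`. -/
theorem projection_estimate_F_L1
    (F : ℝ → ℝ) (Finf : ℝ) (hFinf : 0 < Finf)
    (hFmono : Monotone F)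
    (hF0 : ∀ x, 0 ≤ F x) (hFle : ∀ x, F x ≤ Finf)
    (dx : ℝ) (hdx : 0 < dx) :
    Integrable (fun x => F x - plProj dx F x) volume ∧
      (∫ x, |F x - plProj dx F x|) ≤ Finf * dx :=
  projection_estimate_F_L1_general F Finf hFmono hF0 hFle dx hdx
end

section
/- Let Δx > 0, F_∞ > 0, and let Δt satisfy 0 < Δt ≤ √Δx/(2√F_∞). Let u_j, u_{j+1}, F_j, F_{j+1} be real numbers with 0 ≤ F_j ≤ F_{j+1} ≤ F_∞ and (u_{j+1} − u_j)² ≤ Δx · (F_{j+1} − F_j), and let x_{j+1} = x_j + Δx. Define the characteristic curves x_j(t) = x_j + u_j t + (1/4)(F_j − F_∞/2)t² and x_{j+1}(t) = x_{j+1} + u_{j+1} t + (1/4)(F_{j+1} − F_∞/2)t². Then x_j(t) + Δx/2 < x_{j+1}(t) for all t ∈ [0, Δt]. -/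
/-- Under the CFL-like condition `Δt ≤ √Δx / (2√F_∞)`, forward characteristics emanating
from neighbouring grid points stay at least `Δx/2` apart for all `t ∈ [0, Δt]`. -/
theorem characteristics_stay_apart
    (dx Finf dt : ℝ) (hdx : 0 < dx) (hFinf : 0 < Finf)
    (hdt0 : 0 < dt) (hdt : dt ≤ Real.sqrt dx / (2 * Real.sqrt Finf))
    (uj uj1 Fj Fj1 xj : ℝ)
    (hFj0 : 0 ≤ Fj) (hFjle : Fj ≤ Fj1) (hFj1 : Fj1 ≤ Finf)
    (hE : (uj1 - uj) ^ 2 ≤ dx * (Fj1 - Fj)) :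
    ∀ t ∈ Set.Icc (0 : ℝ) dt,
      (xj + uj * t + (1/4) * (Fj - Finf/2) * t^2) + dx / 2 <
        (xj + dx) + uj1 * t + (1/4) * (Fj1 - Finf/2) * t^2 := by
  intro t ht
  obtain ⟨ht0, htdt⟩ := ht
  set a := Real.sqrt dx with ha_def
  set b := Real.sqrt Finf with hb_def
  set c := Real.sqrt (Fj1 - Fj) with hc_def
  have ha : 0 < a := Real.sqrt_pos.mpr hdx
  have hb : 0 < b := Real.sqrt_pos.mpr hFinf
  have hc : 0 ≤ c := Real.sqrt_nonneg _
  have ha2 : a ^ 2 = dx := Real.sq_sqrt hdx.le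
  have hb2 : b ^ 2 = Finf := Real.sq_sqrt hFinf.le
  have hc2 : c ^ 2 = Fj1 - Fj := Real.sq_sqrt (by linarith)
  have hcb : c ≤ b := Real.sqrt_le_sqrt (by linarith)
  -- t ≤ a / (2 b), i.e. 2 b t ≤ a
  have h2bt : 2 * b * t ≤ a := by
    have h := le_trans htdt hdt
    rw [le_div_iff₀ (by positivity)] at h
    nlinarith
  have h2ct : 2 * c * t ≤ a := le_trans (by nlinarith) h2bt
  -- d ≥ -(a*c)
  have hd2 : (uj1 - uj) ^ 2 ≤ (a * c) ^ 2 := by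
    have : (a * c) ^ 2 = dx * (Fj1 - Fj) := by rw [mul_pow, ha2, hc2]
    linarith
  have hac : 0 ≤ a * c := mul_nonneg ha.le hc
  have hdlb : -(a * c) ≤ uj1 - uj := by nlinarith [sq_nonneg (uj1 - uj + a * c), hac]
  -- key product giving strictness
  have hkey : 0 ≤ (a - 2 * c * t) * (7 * a - 2 * c * t) :=
    mul_nonneg (by linarith) (by linarith)
  have hdt' : -(a * c) * t ≤ (uj1 - uj) * t := mul_le_mul_of_nonneg_right hdlb ht0
  nlinarith [sq_nonneg a, mul_pos ha ha]
end

section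
/- Let M > 0, let u, F : ℝ → ℝ be locally absolutely continuous with derivatives u', F' satisfying u'(y)² ≤ F'(y) ≤ M for almost every y ∈ ℝ, and let c ∈ ℝ. Then for every t with 0 ≤ t ≤ 1/(2√M), the map X(y) = y + u(y)·t + (1/4)(F(y) − c)·t² satisfies X(b) − X(a) ≥ (9/16)(b − a) for all a ≤ b; in particular X is strictly increasing. -/
open MeasureTheory intervalIntegral

/-- The no-wave-breaking mechanism behind the CFL-like condition: if `u'² ≤ F' ≤ M`
almost everywhere and `0 ≤ t ≤ 1/(2√M)`, then the forward characteristic map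
`X(y) = y + u(y) t + (1/4)(F(y) − c) t²` satisfies `X b - X a ≥ (9/16)(b - a)`;
in particular it is strictly increasing. -/
theorem characteristic_map_strictMono
    (M : ℝ) (hM : 0 < M) (u F u' F' : ℝ → ℝ)
    (hu'int : ∀ a b : ℝ, IntervalIntegrable u' volume a b)
    (hF'int : ∀ a b : ℝ, IntervalIntegrable F' volume a b)
    (huFTC : ∀ a b : ℝ, a ≤ b → u b - u a = ∫ z in a..b, u' z)
    (hFFTC : ∀ a b : ℝ, a ≤ b → F b - F a = ∫ z in a..b, F' z)
    (hu'ae : ∀ᵐ y ∂volume, HasDerivAt u (u' y) y)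
    (hF'ae : ∀ᵐ y ∂volume, HasDerivAt F (F' y) y)
    (hbound : ∀ᵐ y ∂volume, u' y ^ 2 ≤ F' y ∧ F' y ≤ M)
    (c t : ℝ) (ht0 : 0 ≤ t) (ht : t ≤ 1 / (2 * Real.sqrt M)) :
    (∀ a b : ℝ, a ≤ b →
      (9/16) * (b - a) ≤
        (b + u b * t + (1/4) * (F b - c) * t^2) -
          (a + u a * t + (1/4) * (F a - c) * t^2)) ∧
    StrictMono (fun y => y + u y * t + (1/4) * (F y - c) * t^2) := by
  have hsM : 0 < Real.sqrt M := Real.sqrt_pos.mpr hM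
  have htM : Real.sqrt M * t ≤ 1/2 := by
    rw [le_div_iff₀ (by positivity)] at ht
    nlinarith
  -- pointwise a.e. lower bound on the integrand
  have key : ∀ᵐ z ∂volume, (9:ℝ)/16 ≤ 1 + u' z * t + F' z * t^2 / 4 := by
    filter_upwards [hbound] with z hz
    obtain ⟨h1, h2⟩ := hz
    set s := Real.sqrt (F' z) with hs
    have hF0 : 0 ≤ F' z := le_trans (sq_nonneg _) h1
    have hs0 : 0 ≤ s := Real.sqrt_nonneg _
    have hs2 : s ^ 2 = F' z := Real.sq_sqrt hF0
    have hsleM : s ≤ Real.sqrt M := Real.sqrt_le_sqrt h2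
    have hst : s * t ≤ 1/2 :=
      le_trans (mul_le_mul_of_nonneg_right hsleM ht0) htM
    have hst0 : 0 ≤ s * t := mul_nonneg hs0 ht0
    have habs : -s ≤ u' z := by
      nlinarith [sq_nonneg (u' z + s)]
    have hut : -(s * t) ≤ u' z * t := by
      have := mul_le_mul_of_nonneg_right habs ht0
      linarith
    nlinarith [mul_nonneg (by linarith : (0:ℝ) ≤ 1/2 - s*t) (by linarith : (0:ℝ) ≤ 7/2 - s*t)]
  have main : ∀ a b : ℝ, a ≤ b →
      (9/16) * (b - a) ≤
        (b + u b * t + (1/4) * (F b - c) * t^2) -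
          (a + u a * t + (1/4) * (F a - c) * t^2) := by
    intro a b hab
    have hint : IntervalIntegrable (fun z => 1 + u' z * t + F' z * t^2 / 4) volume a b := by
      apply IntervalIntegrable.add
      · exact (_root_.intervalIntegrable_const).add ((hu'int a b).mul_const t)
      · exact ((hF'int a b).mul_const (t^2)).div_const 4
    have hconst : IntervalIntegrable (fun _ : ℝ => (9:ℝ)/16) volume a b :=
      _root_.intervalIntegrable_const
    have hmono := intervalIntegral.integral_mono_ae hab hconst hint key
    have hval : (∫ z in a..b, (1 + u' z * t + F' z * t^2 / 4)) =
        (b - a) + (u b - u a) * t + (F b - F a) * t^2 / 4 := by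
      rw [intervalIntegral.integral_add, intervalIntegral.integral_add,
        intervalIntegral.integral_const, intervalIntegral.integral_mul_const,
        intervalIntegral.integral_div, intervalIntegral.integral_mul_const,
        ← huFTC a b hab, ← hFFTC a b hab]
      · simp [smul_eq_mul]
      · exact _root_.intervalIntegrable_const
      · exact (hu'int a b).mul_const t
      · exact (_root_.intervalIntegrable_const).add ((hu'int a b).mul_const t)
      · exact ((hF'int a b).mul_const (t^2)).div_const 4
    rw [intervalIntegral.integral_const, smul_eq_mul, hval] at hmono
    nlinarith [hmono]
  refine ⟨main, fun a b hab => ?_⟩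
  have := main a b hab.le
  simp only
  nlinarith [this, hab]
end

section
/- Define u : [0,2] × ℝ → ℝ by u(t,x) = 1 − t/2 for x < −(1−t/2)², u(t,x) = −x/(1−t/2) for −(1−t/2)² ≤ x ≤ (1−t/2)² and t < 2, u(t,x) = −1 + t/2 for x > (1−t/2)², and u(2,x) = 0 for all x. Then u is uniformly bounded on [0,2] × ℝ and uniformly Hölder continuous with exponent 1/2: there exists a constant C > 0 such that |u(t,x) − u(s,y)| ≤ C·(|t−s| + |x−y|)^{1/2} for all t, s ∈ [0,2] and x, y ∈ ℝ. -/
/-!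
Write `a = 1 - t/2 ∈ [0,1]`. Then `u(t,·)` is `x ↦ -c_a(x)/a`, where `c_a` clamps to
`[-a², a²]`. So `|u| ≤ a`, and `u(t,·)` is `1/a`-Lipschitz; since also `|u(t,x) - u(t,y)| ≤ 2a`, the product
of the two bounds gives `|u(t,x) - u(t,y)|² ≤ 2|x - y|` whatever `a` is. In `a`, the profile is
`±a` outside the plateau boundaries and `-x/a` with `|x| ≤ a²` between them, so it is
`1`-Lipschitz in `a`. The triangle inequality combines the two estimates.
-/

/-- The peakon solution of the Hunter–Saxton equation from Example 1:
`u(t,x) = 1 - t/2` for `x < -(1-t/2)²`, `u(t,x) = -x/(1-t/2)` for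
`-(1-t/2)² ≤ x ≤ (1-t/2)²`, and `u(t,x) = -1 + t/2` for `x > (1-t/2)²`.
(At `t = 2` this formula gives `u(2,x) = 0` for all `x`.) -/
noncomputable def peakon (t x : ℝ) : ℝ :=
  if x < -(1 - t/2)^2 then 1 - t/2
  else if x ≤ (1 - t/2)^2 then -x / (1 - t/2)
  else -1 + t/2

theorem sq_div_self {G₀ : Type*} [GroupWithZero G₀] (a : G₀) : a ^ 2 / a = a := by
  rw [sq, mul_self_div_self]

/-- At `a = 0` the division by zero yields `0`, the value of the peakon at the breaking time. -/
noncomputable def peakonProfile (a x : ℝ) : ℝ :=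
  -max (min x (a ^ 2)) (-a ^ 2) / a

theorem peakon_eq_peakonProfile (t x : ℝ) : peakon t x = peakonProfile (1 - t / 2) x := by
  unfold peakon peakonProfile
  split_ifs with h₁ h₂
  · rw [min_eq_left (by nlinarith), max_eq_right h₁.le, neg_neg, sq_div_self]
  · rw [min_eq_left h₂, max_eq_left (not_lt.mp h₁)]
  · rw [min_eq_right (not_le.mp h₂).le, max_eq_left (by nlinarith), neg_div, sq_div_self]; ring

theorem abs_peakonProfile_le {a : ℝ} (ha : 0 ≤ a) (x : ℝ) : |peakonProfile a x| ≤ a := by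
  have hclamp : |max (min x (a ^ 2)) (-a ^ 2)| ≤ a ^ 2 :=
    abs_le.mpr ⟨le_max_right _ _, max_le (min_le_right _ _) (by nlinarith)⟩
  calc |peakonProfile a x| = |max (min x (a ^ 2)) (-a ^ 2)| / a := by
        rw [peakonProfile, abs_div, abs_neg, abs_of_nonneg ha]
    _ ≤ a ^ 2 / a := div_le_div_of_nonneg_right hclamp ha
    _ = a := sq_div_self a

theorem abs_peakonProfile_sub_le_div {a : ℝ} (ha : 0 ≤ a) (x y : ℝ) :
    |peakonProfile a x - peakonProfile a y| ≤ |x - y| / a := by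
  have hclamp : |max (min y (a ^ 2)) (-a ^ 2) - max (min x (a ^ 2)) (-a ^ 2)| ≤ |x - y| :=
    calc _ ≤ |min y (a ^ 2) - min x (a ^ 2)| := abs_max_sub_max_le_abs _ _ _
      _ ≤ max |y - x| |a ^ 2 - a ^ 2| := abs_min_sub_min_le_max _ _ _ _
      _ = |x - y| := by rw [sub_self, abs_zero, abs_sub_comm, max_eq_left (abs_nonneg _)]
  calc |peakonProfile a x - peakonProfile a y|
      = |max (min y (a ^ 2)) (-a ^ 2) - max (min x (a ^ 2)) (-a ^ 2)| / a := by
        rw [peakonProfile, peakonProfile, ← sub_div, abs_div, abs_of_nonneg ha]; ring_nf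
    _ ≤ |x - y| / a := div_le_div_of_nonneg_right hclamp ha

theorem le_sqrt_two_mul_of_le_div_of_le_two_mul {d u a : ℝ} (hd : 0 ≤ d)
    (h₁ : d ≤ u / a) (h₂ : d ≤ 2 * a) : d ≤ √(2 * u) := by
  rcases hd.eq_or_lt with rfl | hd
  · positivity
  have ha : 0 < a := by linarith
  refine Real.le_sqrt_of_sq_le ?_
  calc d ^ 2 = d * d := sq d
    _ ≤ u / a * (2 * a) := mul_le_mul h₁ h₂ hd.le (hd.le.trans h₁)
    _ = 2 * u := by field_simp

theorem abs_peakonProfile_sub_le_sqrt {a : ℝ} (ha : 0 ≤ a) (x y : ℝ) :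
    |peakonProfile a x - peakonProfile a y| ≤ √(2 * |x - y|) :=
  le_sqrt_two_mul_of_le_div_of_le_two_mul (abs_nonneg _)
    (abs_peakonProfile_sub_le_div ha x y)
    (by linarith [abs_sub (peakonProfile a x) (peakonProfile a y),
      abs_peakonProfile_le ha x, abs_peakonProfile_le ha y])

/- In every regime the profile is `±a` or `-x/a` with `|x| ≤ a²`, so its slope in `a` lies in
`[-1, 1]`. -/
theorem abs_peakonProfile_sub_le_of_le {a b : ℝ} (ha : 0 ≤ a) (hab : a ≤ b) (x : ℝ) :
    |peakonProfile a x - peakonProfile b x| ≤ b - a := by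
  rcases ha.eq_or_lt with rfl | ha
  · simpa [peakonProfile] using abs_peakonProfile_le hab x
  have hb : 0 < b := ha.trans_le hab
  unfold peakonProfile
  rw [div_sub_div _ _ ha.ne' hb.ne', abs_div, abs_of_pos (mul_pos ha hb),
    div_le_iff₀ (mul_pos ha hb), abs_le]
  rcases min_cases x (a ^ 2) with ⟨h₁, h₁'⟩ | ⟨h₁, h₁'⟩ <;>
  rcases min_cases x (b ^ 2) with ⟨h₂, h₂'⟩ | ⟨h₂, h₂'⟩ <;> rw [h₁, h₂] <;>
  rcases max_cases (min x (a ^ 2)) (-a ^ 2) with ⟨h₃, h₃'⟩ | ⟨h₃, h₃'⟩ <;>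
  rcases max_cases (min x (b ^ 2)) (-b ^ 2) with ⟨h₄, h₄'⟩ | ⟨h₄, h₄'⟩ <;>
  simp only [h₁, h₂] at h₃ h₄ h₃' h₄' <;> rw [h₃, h₄] <;>
  constructor <;> nlinarith [mul_pos ha hb, mul_le_mul_of_nonneg_left hab ha.le]

theorem abs_peakonProfile_sub_le {a b : ℝ} (ha : 0 ≤ a) (hb : 0 ≤ b) (x : ℝ) :
    |peakonProfile a x - peakonProfile b x| ≤ |a - b| := by
  rcases le_total a b with hab | hba
  · rw [abs_sub_comm a b, abs_of_nonneg (sub_nonneg.mpr hab)]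
    exact abs_peakonProfile_sub_le_of_le ha hab x
  · rw [abs_sub_comm, abs_of_nonneg (sub_nonneg.mpr hba)]
    exact abs_peakonProfile_sub_le_of_le hb hba x

theorem half_le_sqrt {d : ℝ} (h₀ : 0 ≤ d) (h₄ : d ≤ 4) : d / 2 ≤ √d :=
  Real.le_sqrt_of_sq_le (by nlinarith)

/-- The peakon is uniformly bounded on `[0,2] × ℝ` and uniformly Hölder continuous with
exponent `1/2` there. -/
theorem peakon_bounded_and_holder :
    (∃ B : ℝ, ∀ t ∈ Set.Icc (0 : ℝ) 2, ∀ x : ℝ, |peakon t x| ≤ B) ∧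
    (∃ C : ℝ, 0 < C ∧
      ∀ t ∈ Set.Icc (0 : ℝ) 2, ∀ s ∈ Set.Icc (0 : ℝ) 2, ∀ x y : ℝ,
        |peakon t x - peakon s y| ≤ C * Real.sqrt (|t - s| + |x - y|)) := by
  refine ⟨⟨1, fun t ⟨ht₀, ht₂⟩ x => ?_⟩,
    ⟨3, three_pos, fun t ⟨ht₀, ht₂⟩ s ⟨hs₀, hs₂⟩ x y => ?_⟩⟩
  · rw [peakon_eq_peakonProfile]
    linarith [abs_peakonProfile_le (a := 1 - t / 2) (by linarith) x]
  rw [peakon_eq_peakonProfile, peakon_eq_peakonProfile]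
  have ha : 0 ≤ 1 - t / 2 := by linarith
  have hb : 0 ≤ 1 - s / 2 := by linarith
  set a := 1 - t / 2
  set b := 1 - s / 2
  set S := |t - s| + |x - y|
  have hspace : |peakonProfile a x - peakonProfile a y| ≤ 2 * √S :=
    calc _ ≤ √(2 * |x - y|) := abs_peakonProfile_sub_le_sqrt ha x y
      _ ≤ √(2 ^ 2 * S) :=
        Real.sqrt_le_sqrt (by linarith [abs_nonneg (t - s), abs_nonneg (x - y)])
      _ = 2 * √S := by rw [Real.sqrt_mul (by norm_num), Real.sqrt_sq two_pos.le]
  have htime : |peakonProfile a y - peakonProfile b y| ≤ √S :=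
    calc _ ≤ |a - b| := abs_peakonProfile_sub_le ha hb y
      _ = |t - s| / 2 := by rw [show a - b = (s - t) / 2 by ring, abs_div, abs_sub_comm, abs_two]
      _ ≤ √|t - s| := half_le_sqrt (abs_nonneg _) (abs_le.mpr ⟨by linarith, by linarith⟩)
      _ ≤ √S := Real.sqrt_le_sqrt (le_add_of_nonneg_right (abs_nonneg _))
  linarith [abs_sub_le (peakonProfile a x) (peakonProfile a y) (peakonProfile b y)]
end

section
/- Define u : [0,∞) × ℝ → ℝ by u(t,x) = 1 − t/2 for x < −(1−t/2)², u(t,x) = −x/(1−t/2) for −(1−t/2)² ≤ x ≤ (1−t/2)² and t ≠ 2, u(t,x) = −1 + t/2 for x > (1−t/2)², and u(2,x) = 0 for all x; define F : [0,∞) × ℝ → ℝ by F(t,x) = 0 for x ≤ −(1−t/2)², F(t,x) = x/(1−t/2)² + 1 for −(1−t/2)² < x ≤ (1−t/2)² and t ≠ 2, F(t,x) = 2 for x > (1−t/2)², and F(2,x) = 0 for x ≤ 0, F(2,x) = 2 for x > 0. Then for every smooth compactly supported test function φ on [0,∞) × ℝ, ∫_0^∞ ∫_ℝ [ φ_t(t,x)·u(t,x)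 + φ_x(t,x)·u(t,x)²/2 + φ(t,x)·(F(t,x)/2 − 1/2) ] dx dt + ∫_ℝ φ(0,x)·u(0,x) dx = 0. -/
open MeasureTheory

/-- The cumulative energy of the conservative peakon:
`F(t,x) = 0` for `x ≤ -(1-t/2)²`, `F(t,x) = x/(1-t/2)² + 1` for
`-(1-t/2)² < x ≤ (1-t/2)²`, and `F(t,x) = 2` for `x > (1-t/2)²`.
(At `t = 2` this gives `F(2,x) = 0` for `x ≤ 0` and `F(2,x) = 2` for `x > 0`.) -/
noncomputable def peakonF (t x : ℝ) : ℝ :=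
  if x ≤ -(1 - t/2)^2 then 0
  else if x ≤ (1 - t/2)^2 then x / (1 - t/2)^2 + 1
  else 2

section PeakonAux

open MeasureTheory Set

noncomputable def pkV (t x : ℝ) : ℝ :=
  if x < -(1 - t/2)^2 then -(1/2)
  else if x ≤ (1 - t/2)^2 then -x / (2 * (1 - t/2)^2)
  else 1/2

noncomputable def pkW (t x : ℝ) : ℝ :=
  if x < -(1 - t/2)^2 then 0
  else if x ≤ (1 - t/2)^2 then x / (1 - t/2)^2
  else 0

lemma peakon_left {t x : ℝ} (h : x < -(1 - t/2)^2) : peakon t x = 1 - t/2 := if_pos h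

lemma peakon_mid {t x : ℝ} (h1 : -(1 - t/2)^2 ≤ x) (h2 : x ≤ (1 - t/2)^2) :
    peakon t x = -x / (1 - t/2) := by
  unfold peakon; rw [if_neg (not_lt.mpr h1), if_pos h2]

lemma peakon_right {t x : ℝ} (h : (1 - t/2)^2 < x) : peakon t x = -1 + t/2 := by
  unfold peakon
  rw [if_neg (by push_neg; nlinarith [sq_nonneg (1 - t/2)]), if_neg (not_le.mpr h)]

lemma pkV_left {t x : ℝ} (h : x < -(1 - t/2)^2) : pkV t x = -(1/2) := if_pos h

lemma pkV_mid {t x : ℝ} (h1 : -(1 - t/2)^2 ≤ x) (h2 : x ≤ (1 - t/2)^2) :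
    pkV t x = -x / (2 * (1 - t/2)^2) := by
  unfold pkV; rw [if_neg (not_lt.mpr h1), if_pos h2]

lemma pkV_right {t x : ℝ} (h : (1 - t/2)^2 < x) : pkV t x = 1/2 := by
  unfold pkV
  rw [if_neg (by push_neg; nlinarith [sq_nonneg (1 - t/2)]), if_neg (not_le.mpr h)]

lemma pkW_left {t x : ℝ} (h : x < -(1 - t/2)^2) : pkW t x = 0 := if_pos h

lemma pkW_mid {t x : ℝ} (h1 : -(1 - t/2)^2 ≤ x) (h2 : x ≤ (1 - t/2)^2) :
    pkW t x = x / (1 - t/2)^2 := by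
  unfold pkW; rw [if_neg (not_lt.mpr h1), if_pos h2]

lemma pkW_right {t x : ℝ} (h : (1 - t/2)^2 < x) : pkW t x = 0 := by
  unfold pkW
  rw [if_neg (by push_neg; nlinarith [sq_nonneg (1 - t/2)]), if_neg (not_le.mpr h)]

lemma peakon_abs_le (t x : ℝ) : |peakon t x| ≤ |1 - t/2| := by
  unfold peakon
  split_ifs with h1 h2
  · exact le_rfl
  · push_neg at h1
    rcases eq_or_ne (1 - t/2) 0 with h0 | h0
    · rw [h0] at h1 h2 ⊢
      have hx : x = 0 := by nlinarith
      simp [hx]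
    · rw [abs_div, div_le_iff₀ (abs_pos.mpr h0), abs_neg]
      calc |x| ≤ (1 - t/2)^2 := abs_le.mpr ⟨by linarith, h2⟩
        _ = |1 - t/2| * |1 - t/2| := by rw [← abs_mul, abs_mul_self, sq]
  · rw [show (-1 + t/2 : ℝ) = -(1 - t/2) by ring, abs_neg]

lemma pkV_abs_le (t x : ℝ) : |pkV t x| ≤ 1/2 := by
  unfold pkV
  split_ifs with h1 h2
  · rw [abs_neg]; rw [abs_of_nonneg (by norm_num : (0:ℝ) ≤ 1/2)]
  · push_neg at h1
    rcases eq_or_ne (1 - t/2) 0 with h0 | h0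
    · rw [h0] at h1 h2 ⊢
      have hx : x = 0 := by nlinarith
      simp [hx]
    · have hp : (0:ℝ) < (1 - t/2)^2 := lt_of_le_of_ne (sq_nonneg _) (Ne.symm (pow_ne_zero 2 h0))
      rw [abs_div, div_le_iff₀ (by positivity : (0:ℝ) < |2 * (1 - t/2)^2|), abs_neg]
      have : |2 * (1 - t/2)^2| = 2 * (1 - t/2)^2 := abs_of_pos (by positivity)
      rw [this]
      calc |x| ≤ (1 - t/2)^2 := abs_le.mpr ⟨by linarith, h2⟩
        _ ≤ 1/2 * (2 * (1 - t/2)^2) := by linarith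
  · rw [abs_of_nonneg (by norm_num : (0:ℝ) ≤ 1/2)]

lemma pkW_abs_le (t x : ℝ) : |pkW t x| ≤ 1 := by
  unfold pkW
  split_ifs with h1 h2
  · norm_num
  · push_neg at h1
    rcases eq_or_ne (1 - t/2) 0 with h0 | h0
    · rw [h0] at h1 h2 ⊢
      have hx : x = 0 := by nlinarith
      simp [hx]
    · have hp : (0:ℝ) < (1 - t/2)^2 := lt_of_le_of_ne (sq_nonneg _) (Ne.symm (pow_ne_zero 2 h0))
      rw [abs_div, div_le_iff₀ (by positivity : (0:ℝ) < |(1 - t/2)^2|)]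
      rw [abs_of_pos hp, one_mul]
      exact abs_le.mpr ⟨by linarith, h2⟩
  · norm_num

lemma peakon_eq_clamp (t x : ℝ) :
    peakon t x = max (min (-x) ((1 - t/2)^2)) (-(1 - t/2)^2) / (1 - t/2) := by
  unfold peakon
  split_ifs with h1 h2
  · rw [min_eq_right (by linarith), max_eq_left (by nlinarith [sq_nonneg (1 - t/2)])]
    rcases eq_or_ne (1 - t/2) 0 with h0 | h0
    · rw [h0]; norm_num
    · rw [sq, mul_div_assoc, div_self h0, mul_one]
  · push_neg at h1
    rw [min_eq_left (by linarith), max_eq_left (by linarith)]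
  · push_neg at h1 h2
    rw [min_eq_left (by nlinarith [sq_nonneg (1 - t/2)]), max_eq_right (by nlinarith [sq_nonneg (1 - t/2)])]
    rcases eq_or_ne (1 - t/2) 0 with h0 | h0
    · rw [h0]; norm_num; linarith [h0]
    · rw [neg_div, sq, mul_div_assoc, div_self h0, mul_one]; ring

lemma continuous_peakon : Continuous fun p : ℝ × ℝ => peakon p.1 p.2 := by
  rw [continuous_iff_continuousAt]
  intro p
  rcases eq_or_ne (1 - p.1/2) 0 with h0 | h0
  · have h00 : peakon p.1 p.2 = 0 := by
      have h := peakon_abs_le p.1 p.2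
      rw [h0, abs_zero] at h
      exact abs_eq_zero.mp (le_antisymm h (abs_nonneg _))
    have htend : Filter.Tendsto (fun q : ℝ × ℝ => peakon q.1 q.2) (nhds p) (nhds 0) := by
      have hc : Continuous fun q : ℝ × ℝ => |1 - q.1/2| := by fun_prop
      have hg : Filter.Tendsto (fun q : ℝ × ℝ => |1 - q.1/2|) (nhds p) (nhds 0) := by
        simpa [h0] using hc.tendsto p
      exact squeeze_zero_norm (fun q => by rw [Real.norm_eq_abs]; exact peakon_abs_le q.1 q.2) hg
    simpa [ContinuousAt, h00] using htend
  · have hca : ContinuousAt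
        (fun q : ℝ × ℝ => max (min (-q.2) ((1 - q.1/2)^2)) (-(1 - q.1/2)^2) / (1 - q.1/2)) p :=
      ContinuousAt.div (by fun_prop) (by fun_prop) h0
    exact hca.congr (Filter.Eventually.of_forall fun q => (peakon_eq_clamp q.1 q.2).symm)

lemma measurable_pkV2 : Measurable fun p : ℝ × ℝ => pkV p.1 p.2 := by
  unfold pkV
  refine Measurable.ite ?_ measurable_const (Measurable.ite ?_ (by fun_prop) measurable_const)
  · exact measurableSet_lt measurable_snd (by fun_prop)
  · exact measurableSet_le measurable_snd (by fun_prop)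

lemma measurable_pkW2 : Measurable fun p : ℝ × ℝ => pkW p.1 p.2 := by
  unfold pkW
  refine Measurable.ite ?_ measurable_const (Measurable.ite ?_ (by fun_prop) measurable_const)
  · exact measurableSet_lt measurable_snd (by fun_prop)
  · exact measurableSet_le measurable_snd (by fun_prop)

lemma Fhalf {t : ℝ} (ht : (1 - t/2) ≠ 0) (x : ℝ) :
    peakonF t x / 2 - 1/2 = pkV t x + pkW t x := by
  have ha2 : ((1 - t/2)^2 : ℝ) ≠ 0 := pow_ne_zero 2 ht
  unfold peakonF pkV pkW
  rcases lt_trichotomy x (-(1 - t/2)^2) with h | h | h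
  · rw [if_pos h.le, if_pos h, if_pos h]; norm_num
  · have hle : x ≤ (1 - t/2)^2 := by nlinarith [sq_nonneg (1 - t/2)]
    rw [if_pos h.le, if_neg (not_lt.mpr h.ge), if_pos hle, if_neg (not_lt.mpr h.ge), if_pos hle, h]
    rw [neg_neg, mul_comm (2:ℝ), div_mul_eq_div_div, div_self ha2, neg_div, div_self ha2]
    norm_num
  · rw [if_neg (not_le.mpr h), if_neg (not_lt.mpr h.le), if_neg (not_lt.mpr h.le)]
    by_cases h2 : x ≤ (1 - t/2)^2
    · rw [if_pos h2, if_pos h2, if_pos h2]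
      have e : x / (2 * (1 - t/2)^2) = (x/(1 - t/2)^2)/2 := by rw [mul_comm, div_mul_eq_div_div]
      rw [neg_div, e]; ring
    · rw [if_neg h2, if_neg h2, if_neg h2]; norm_num

section Helpers

open MeasureTheory Set

variable {φ : ℝ × ℝ → ℝ}

lemma hasDerivAt_phi_t (hφ : ContDiff ℝ (⊤ : ℕ∞) φ) (t x : ℝ) :
    HasDerivAt (fun τ => φ (τ, x)) ((fderiv ℝ φ (t, x)) (1, 0)) t := by
  have h1 : HasDerivAt (fun τ : ℝ => (τ, x)) ((1 : ℝ), (0 : ℝ)) t := by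
    simpa using (hasDerivAt_id t).prodMk (hasDerivAt_const t x)
  exact (hφ.differentiable (by simp) (t, x)).hasFDerivAt.comp_hasDerivAt t h1

lemma hasDerivAt_phi_x (hφ : ContDiff ℝ (⊤ : ℕ∞) φ) (t x : ℝ) :
    HasDerivAt (fun y => φ (t, y)) ((fderiv ℝ φ (t, x)) (0, 1)) x := by
  have h1 : HasDerivAt (fun y : ℝ => (t, y)) ((0 : ℝ), (1 : ℝ)) x := by
    simpa using (hasDerivAt_const x t).prodMk (hasDerivAt_id x)
  exact (hφ.differentiable (by simp) (t, x)).hasFDerivAt.comp_hasDerivAt x h1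

lemma phi_bounds (hφ : ContDiff ℝ (⊤ : ℕ∞) φ) (hφc : HasCompactSupport φ) :
    ∃ T M0 M1 : ℝ, 0 < T ∧ 0 ≤ M0 ∧ 0 ≤ M1 ∧
      (∀ p : ℝ × ℝ, p ∉ Icc (-T) T ×ˢ Icc (-T) T → φ p = 0 ∧ fderiv ℝ φ p = 0) ∧
      (∀ p, |φ p| ≤ M0) ∧ (∀ (p : ℝ × ℝ) (v : ℝ × ℝ), |(fderiv ℝ φ p) v| ≤ M1 * ‖v‖) := by
  obtain ⟨r, hr⟩ := hφc.isBounded.subset_closedBall (0, 0)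
  obtain ⟨C0, hC0⟩ := hφc.exists_bound_of_continuous hφ.continuous
  obtain ⟨C1, hC1⟩ := (hφc.fderiv ℝ).exists_bound_of_continuous (hφ.continuous_fderiv (by simp))
  refine ⟨max r 1, max C0 0, max C1 0, lt_of_lt_of_le one_pos (le_max_right _ _),
    le_max_right _ _, le_max_right _ _, ?_, ?_, ?_⟩
  · intro p hp
    have hps : p ∉ tsupport φ := by
      intro hmem
      apply hp
      have h1 : p ∈ Metric.closedBall ((0:ℝ), (0:ℝ)) (max r 1) :=
        Metric.closedBall_subset_closedBall (le_max_left r 1) (hr hmem)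
      rw [← closedBall_prod_same] at h1
      have h2 := h1.1; have h3 := h1.2
      rw [Real.closedBall_eq_Icc] at h2 h3
      constructor
      · simpa using h2
      · simpa using h3
    refine ⟨image_eq_zero_of_notMem_tsupport hps, ?_⟩
    by_contra hne
    exact hps (support_fderiv_subset ℝ hne)
  · intro p
    exact le_trans (by simpa [Real.norm_eq_abs] using hC0 p) (le_max_left _ _)
  · intro p v
    calc |(fderiv ℝ φ p) v| ≤ ‖fderiv ℝ φ p‖ * ‖v‖ := by
          simpa [Real.norm_eq_abs] using (fderiv ℝ φ p).le_opNorm v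
      _ ≤ max C1 0 * ‖v‖ :=
          mul_le_mul_of_nonneg_right (le_trans (hC1 p) (le_max_left _ _)) (norm_nonneg v)

lemma integrable_aux {f : ℝ → ℝ} (hm : AEStronglyMeasurable f volume) (C T : ℝ)
    (hb : ∀ y, |f y| ≤ C) (hs : ∀ y, y ∉ Icc (-T) T → f y = 0) : Integrable f := by
  have hind : Integrable ((Icc (-T : ℝ) T).indicator fun _ => C) :=
    (integrable_indicator_iff measurableSet_Icc).mpr
      (integrableOn_const measure_Icc_lt_top.ne)
  refine hind.mono' hm ?_
  filter_upwards with y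
  by_cases hy : y ∈ Icc (-T : ℝ) T
  · rw [indicator_of_mem hy, Real.norm_eq_abs]; exact hb y
  · rw [indicator_of_notMem hy, Real.norm_eq_abs, hs y hy, abs_zero]

lemma integrable_prod_aux {f : ℝ × ℝ → ℝ}
    (hm : AEStronglyMeasurable f ((volume.restrict (Ioi (0:ℝ))).prod volume)) (C T : ℝ)
    (hb : ∀ p, |f p| ≤ C) (hs : ∀ p : ℝ × ℝ, p ∉ Icc (-T) T ×ˢ Icc (-T) T → f p = 0) :
    Integrable f ((volume.restrict (Ioi (0:ℝ))).prod volume) := by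
  set μ : Measure (ℝ × ℝ) := (volume.restrict (Ioi (0:ℝ))).prod volume with hμ
  have hfin : μ (Icc (-T) T ×ˢ Icc (-T) T) < ⊤ := by
    rw [hμ, Measure.prod_prod]
    have h1 : volume.restrict (Ioi (0:ℝ)) (Icc (-T) T) ≤ volume (Icc (-T) T) :=
      Measure.restrict_apply_le (μ := (volume : Measure ℝ)) (Ioi (0:ℝ)) (Icc (-T) T)
    exact ENNReal.mul_lt_top (lt_of_le_of_lt h1 measure_Icc_lt_top) measure_Icc_lt_top
  have hind : Integrable ((Icc (-T : ℝ) T ×ˢ Icc (-T : ℝ) T).indicator fun _ => C) μ :=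
    (integrable_indicator_iff (measurableSet_Icc.prod measurableSet_Icc)).mpr
      (integrableOn_const hfin.ne)
  refine hind.mono' hm ?_
  filter_upwards with p
  by_cases hp : p ∈ Icc (-T : ℝ) T ×ˢ Icc (-T : ℝ) T
  · rw [indicator_of_mem hp, Real.norm_eq_abs]; exact hb p
  · rw [indicator_of_notMem hp, Real.norm_eq_abs, hs p hp, abs_zero]

end Helpers

section Step1

open MeasureTheory Set intervalIntegral

lemma norm01 : ‖((0:ℝ), (1:ℝ))‖ = 1 := by
  simp [Prod.norm_def]

lemma norm10 : ‖((1:ℝ), (0:ℝ))‖ = 1 := by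
  simp [Prod.norm_def]

lemma step1 {φ : ℝ × ℝ → ℝ} (hφ : ContDiff ℝ (⊤ : ℕ∞) φ) (hφc : HasCompactSupport φ)
    {t : ℝ} (ht : (1 - t/2) ≠ 0) :
    ∫ x : ℝ, ((fderiv ℝ φ (t, x)) (0, 1) * (peakon t x)^2 / 2 + φ (t, x) * pkW t x) = 0 := by
  obtain ⟨T, M0, M1, hT, hM0, hM1, hsupp, hb0, hb1⟩ := phi_bounds hφ hφc
  have hs0 : (0:ℝ) < (1 - t/2)^2 := lt_of_le_of_ne (sq_nonneg _) (Ne.symm (pow_ne_zero 2 ht))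
  set R : ℝ := max T ((1 - t/2)^2) + 1 with hRdef
  have hTR : T < R := lt_of_le_of_lt (le_max_left _ _) (lt_add_one _)
  have hsR : (1 - t/2)^2 < R := lt_of_le_of_lt (le_max_right _ _) (lt_add_one _)
  have hR0 : 0 < R := lt_trans hT hTR
  set D : ℝ → ℝ := fun x => (fderiv ℝ φ (t, x)) (0, 1) * (peakon t x)^2 / 2 + φ (t, x) * pkW t x
    with hD
  set G : ℝ → ℝ := fun x => φ (t, x) * (peakon t x)^2 / 2 with hG
  have hzero : ∀ x : ℝ, T < |x| → φ (t, x) = 0 ∧ fderiv ℝ φ (t, x) = 0 := by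
    intro x hx
    refine hsupp (t, x) ?_
    intro hmem
    have h2 := hmem.2
    rw [mem_Icc] at h2
    have : |x| ≤ T := abs_le.mpr h2
    linarith
  have hpc : Continuous fun x : ℝ => peakon t x :=
    continuous_peakon.comp (continuous_const.prodMk continuous_id)
  have hφc1 : Continuous fun x : ℝ => φ (t, x) :=
    hφ.continuous.comp (continuous_const.prodMk continuous_id)
  have hfc1 : Continuous fun x : ℝ => (fderiv ℝ φ (t, x)) (0, 1) :=
    ((hφ.continuous_fderiv (by simp)).clm_apply continuous_const).comp
      (continuous_const.prodMk continuous_id)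
  have hGcont : Continuous G := by
    rw [hG]; exact (hφc1.mul (hpc.pow 2)).div_const 2
  have hDmeas : AEStronglyMeasurable D volume := by
    rw [hD]
    exact (((hfc1.mul (hpc.pow 2)).div_const 2).measurable.add
      (hφc1.measurable.mul (measurable_pkW2.comp
        (measurable_const.prodMk measurable_id)))).aestronglyMeasurable
  have hDb : ∀ x, |D x| ≤ M1 * (1 - t/2)^2 / 2 + M0 := by
    intro x
    have h1 : |(fderiv ℝ φ (t, x)) (0, 1)| ≤ M1 := by
      have := hb1 (t, x) (0, 1)
      rwa [norm01, mul_one] at this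
    have h2 : (peakon t x)^2 ≤ (1 - t/2)^2 := by
      have h := peakon_abs_le t x
      calc (peakon t x)^2 = |peakon t x|^2 := (sq_abs _).symm
        _ ≤ |1 - t/2|^2 := by nlinarith [abs_nonneg (peakon t x)]
        _ = (1 - t/2)^2 := sq_abs _
    have h3 := pkW_abs_le t x
    have h4 := hb0 (t, x)
    have habs : |D x| ≤ |(fderiv ℝ φ (t, x)) (0, 1) * (peakon t x)^2 / 2|
        + |φ (t, x) * pkW t x| := by rw [hD]; exact abs_add_le _ _
    have e1 : |(fderiv ℝ φ (t, x)) (0, 1) * (peakon t x)^2 / 2| ≤ M1 * (1 - t/2)^2 / 2 := by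
      rw [abs_div, abs_mul, abs_of_nonneg (sq_nonneg (peakon t x)),
        abs_of_nonneg (by norm_num : (0:ℝ) ≤ 2)]
      have := mul_le_mul h1 h2 (sq_nonneg _) hM1
      linarith
    have e2 : |φ (t, x) * pkW t x| ≤ M0 := by
      rw [abs_mul]
      have := mul_le_mul h4 h3 (abs_nonneg _) hM0
      linarith
    linarith
  have hDint : Integrable D := by
    refine integrable_aux hDmeas _ T hDb ?_
    intro y hy
    have hay : T < |y| := by
      rw [mem_Icc] at hy; push_neg at hy
      rcases le_or_gt (-T) y with h | h
      · exact lt_of_lt_of_le (hy h) (le_abs_self y)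
      · calc T < -y := by linarith
          _ ≤ |y| := neg_le_abs y
    obtain ⟨hz1, hz2⟩ := hzero y hay
    rw [hD]; simp only [hz1, hz2]; simp
  have hkey : ∀ b c : ℝ, b ≤ c → (∀ x ∈ Ioo b c, HasDerivAt G (D x) x) →
      ∫ x in b..c, D x = G c - G b := fun b c hbc hd =>
    intervalIntegral.integral_eq_sub_of_hasDeriv_right_of_le hbc hGcont.continuousOn
      (fun x hx => (hd x hx).hasDerivWithinAt) hDint.intervalIntegrable
  have hd1 : ∀ x ∈ Ioo (-R) (-(1 - t/2)^2), HasDerivAt G (D x) x := by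
    intro x hx
    have hxs : x < -(1 - t/2)^2 := hx.2
    have hev : G =ᶠ[nhds x] fun y => φ (t, y) * ((1 - t/2)^2 / 2) := by
      filter_upwards [Iio_mem_nhds hxs] with y hy
      simp only [hG]
      rw [peakon_left hy]
      ring
    have hder := (hasDerivAt_phi_x hφ t x).mul_const ((1 - t/2)^2 / 2)
    have h2 := hder.congr_of_eventuallyEq hev
    refine h2.congr_deriv (Eq.symm ?_)
    simp only [hD]
    rw [peakon_left hxs, pkW_left hxs]
    ring
  have hd2 : ∀ x ∈ Ioo (-(1 - t/2)^2) ((1 - t/2)^2), HasDerivAt G (D x) x := by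
    intro x hx
    have hev : G =ᶠ[nhds x] fun y => φ (t, y) * (y^2 / (2 * (1 - t/2)^2)) := by
      filter_upwards [Ioo_mem_nhds hx.1 hx.2] with y hy
      simp only [hG]
      rw [peakon_mid hy.1.le hy.2.le]
      have esq : (-y / (1 - t/2))^2 = y^2 / (1 - t/2)^2 := by rw [div_pow, neg_sq]
      have e2 : y^2 / (2 * (1 - t/2)^2) = (y^2 / (1 - t/2)^2) / 2 := by
        rw [mul_comm, div_mul_eq_div_div]
      rw [esq, e2]; ring
    have hq : HasDerivAt (fun y : ℝ => y^2 / (2 * (1 - t/2)^2))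
        ((2 : ℕ) * x ^ (2 - 1) / (2 * (1 - t/2)^2)) x := (hasDerivAt_pow 2 x).div_const _
    have hder := (hasDerivAt_phi_x hφ t x).mul hq
    have h2 := hder.congr_of_eventuallyEq hev
    refine h2.congr_deriv (Eq.symm ?_)
    simp only [hD]
    rw [peakon_mid hx.1.le hx.2.le, pkW_mid hx.1.le hx.2.le]
    have esq : (-x / (1 - t/2))^2 = x^2 / (1 - t/2)^2 := by rw [div_pow, neg_sq]
    have e2 : x^2 / (2 * (1 - t/2)^2) = (x^2 / (1 - t/2)^2) / 2 := by
      rw [mul_comm, div_mul_eq_div_div]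
    have ecast : ((2:ℕ):ℝ) * x^(2-1) / (2 * (1 - t/2)^2) = x / (1 - t/2)^2 := by
      push_cast
      rw [pow_one]
      exact mul_div_mul_left x ((1 - t/2)^2) two_ne_zero
    rw [esq, e2, ecast]
    ring
  have hd3 : ∀ x ∈ Ioo ((1 - t/2)^2) R, HasDerivAt G (D x) x := by
    intro x hx
    have hxs : (1 - t/2)^2 < x := hx.1
    have hev : G =ᶠ[nhds x] fun y => φ (t, y) * ((1 - t/2)^2 / 2) := by
      filter_upwards [Ioi_mem_nhds hxs] with y hy
      simp only [hG]
      rw [peakon_right hy]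
      ring_nf
    have hder := (hasDerivAt_phi_x hφ t x).mul_const ((1 - t/2)^2 / 2)
    have h2 := hder.congr_of_eventuallyEq hev
    refine h2.congr_deriv (Eq.symm ?_)
    simp only [hD]
    rw [peakon_right hxs, pkW_right hxs]
    ring
  have e1 := hkey (-R) (-(1 - t/2)^2) (by linarith) hd1
  have e2 := hkey (-(1 - t/2)^2) ((1 - t/2)^2) (by linarith) hd2
  have e3 := hkey ((1 - t/2)^2) R (by linarith) hd3
  have i1 : IntervalIntegrable D volume (-R) (-(1 - t/2)^2) := hDint.intervalIntegrable
  have i2 : IntervalIntegrable D volume (-(1 - t/2)^2) ((1 - t/2)^2) := hDint.intervalIntegrable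
  have i3 : IntervalIntegrable D volume ((1 - t/2)^2) R := hDint.intervalIntegrable
  have h12 := intervalIntegral.integral_add_adjacent_intervals i1 i2
  have h123 := intervalIntegral.integral_add_adjacent_intervals (i1.trans i2) i3
  have hGR : G R = 0 := by
    simp only [hG]
    rw [(hzero R (by rw [abs_of_pos hR0]; exact hTR)).1]
    ring
  have hGmR : G (-R) = 0 := by
    simp only [hG]
    rw [(hzero (-R) (by rw [abs_neg, abs_of_pos hR0]; exact hTR)).1]
    ring
  have hDzero : ∀ y, y ∉ Ioc (-R) R → D y = 0 := by
    intro y hy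
    have hay : T < |y| := by
      rw [mem_Ioc] at hy; push_neg at hy
      rcases le_or_gt y (-R) with h | h
      · calc T < R := hTR
          _ ≤ -y := by linarith
          _ ≤ |y| := neg_le_abs y
      · exact lt_of_lt_of_le (lt_trans hTR (hy h)) (le_abs_self y)
    obtain ⟨hz1, hz2⟩ := hzero y hay
    rw [hD]; simp only [hz1, hz2]; simp
  calc ∫ x : ℝ, D x = ∫ x in Ioc (-R) R, D x :=
        (setIntegral_eq_integral_of_forall_compl_eq_zero hDzero).symm
    _ = ∫ x in (-R)..R, D x := (intervalIntegral.integral_of_le (by linarith)).symm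
    _ = 0 := by
        rw [← h123, ← h12, e1, e2, e3, hGR, hGmR]
        ring

end Step1

section Step2

open MeasureTheory Set

lemma step2 {φ : ℝ × ℝ → ℝ} (hφ : ContDiff ℝ (⊤ : ℕ∞) φ) (hφc : HasCompactSupport φ) (x : ℝ) :
    ∫ t in Ioi (0:ℝ), ((fderiv ℝ φ (t, x)) (1, 0) * peakon t x + φ (t, x) * pkV t x)
      = -(φ (0, x) * peakon 0 x) := by
  obtain ⟨T, M0, M1, hT, hM0, hM1, hsupp, hb0, hb1⟩ := phi_bounds hφ hφc
  set D : ℝ → ℝ := fun t => (fderiv ℝ φ (t, x)) (1, 0) * peakon t x + φ (t, x) * pkV t x with hD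
  set H : ℝ → ℝ := fun t => φ (t, x) * peakon t x with hH
  have hzero : ∀ t : ℝ, T < |t| → φ (t, x) = 0 ∧ fderiv ℝ φ (t, x) = 0 := by
    intro t htT
    refine hsupp (t, x) ?_
    intro hmem
    have h1 := hmem.1
    rw [mem_Icc] at h1
    have : |t| ≤ T := abs_le.mpr h1
    linarith
  have hpc : Continuous fun t : ℝ => peakon t x :=
    continuous_peakon.comp (continuous_id.prodMk continuous_const)
  have hφc1 : Continuous fun t : ℝ => φ (t, x) :=
    hφ.continuous.comp (continuous_id.prodMk continuous_const)
  have hfc1 : Continuous fun t : ℝ => (fderiv ℝ φ (t, x)) (1, 0) :=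
    ((hφ.continuous_fderiv (by simp)).clm_apply continuous_const).comp
      (continuous_id.prodMk continuous_const)
  have hHcont : Continuous H := by rw [hH]; exact hφc1.mul hpc
  have hDmeas : AEStronglyMeasurable D volume := by
    rw [hD]
    exact ((hfc1.mul hpc).measurable.add (hφc1.measurable.mul
      (measurable_pkV2.comp (measurable_id.prodMk measurable_const)))).aestronglyMeasurable
  have hDb : ∀ t, |D t| ≤ M1 * (1 + T/2) + M0 * (1/2) := by
    intro t
    rcases le_or_gt (|t|) T with h | h
    · have h1 : |(fderiv ℝ φ (t, x)) (1, 0)| ≤ M1 := by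
        have := hb1 (t, x) (1, 0)
        rwa [norm10, mul_one] at this
      have h2 : |peakon t x| ≤ 1 + T/2 := by
        refine (peakon_abs_le t x).trans ?_
        rw [abs_le] at h ⊢
        constructor <;> [linarith [h.1, h.2]; linarith [h.1, h.2]]
      have h3 := pkV_abs_le t x
      have h4 := hb0 (t, x)
      have habs : |D t| ≤ |(fderiv ℝ φ (t, x)) (1, 0) * peakon t x| + |φ (t, x) * pkV t x| := by
        rw [hD]; exact abs_add_le _ _
      have e1 : |(fderiv ℝ φ (t, x)) (1, 0) * peakon t x| ≤ M1 * (1 + T/2) := by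
        rw [abs_mul]
        exact mul_le_mul h1 h2 (abs_nonneg _) hM1
      have e2 : |φ (t, x) * pkV t x| ≤ M0 * (1/2) := by
        rw [abs_mul]
        exact mul_le_mul h4 h3 (abs_nonneg _) hM0
      linarith
    · obtain ⟨hz1, hz2⟩ := hzero t h
      rw [hD]; simp only [hz1, hz2]
      simp
      positivity
  have hDint : Integrable D := by
    refine integrable_aux hDmeas _ T hDb ?_
    intro y hy
    have hay : T < |y| := by
      rw [mem_Icc] at hy; push_neg at hy
      rcases le_or_gt (-T) y with h | h
      · exact lt_of_lt_of_le (hy h) (le_abs_self y)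
      · calc T < -y := by linarith
          _ ≤ |y| := neg_le_abs y
    obtain ⟨hz1, hz2⟩ := hzero y hay
    rw [hD]; simp only [hz1, hz2]; simp
  rcases eq_or_ne x 0 with rfl | hx0
  · have hpe : ∀ t : ℝ, peakon t 0 = 0 := fun t => by
      rw [peakon_mid (by nlinarith [sq_nonneg (1 - t/2)]) (sq_nonneg _)]
      simp
    have hve : ∀ t : ℝ, pkV t 0 = 0 := fun t => by
      rw [pkV_mid (by nlinarith [sq_nonneg (1 - t/2)]) (sq_nonneg _)]
      simp
    have hDz : D = fun _ => (0:ℝ) := by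
      funext t
      rw [hD]; simp only [hpe t, hve t]; simp
    rw [hDz]
    simp [hpe 0]
  · have hr0 : 0 < Real.sqrt |x| := Real.sqrt_pos.mpr (abs_pos.mpr hx0)
    set r : ℝ := Real.sqrt |x| with hr
    have hr2 : r^2 = |x| := Real.sq_sqrt (abs_nonneg x)
    set c1 : ℝ := max 0 (2 - 2*r) with hc1
    set c2 : ℝ := 2 + 2*r with hc2
    set Tb : ℝ := max (T + 1) c2 with hTb
    have hc10 : 0 ≤ c1 := le_max_left _ _
    have hc1c2 : c1 ≤ c2 := max_le (by rw [hc2]; linarith) (by rw [hc2]; linarith)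
    have hc2Tb : c2 ≤ Tb := le_max_right _ _
    have hTTb : T < Tb := lt_of_lt_of_le (by linarith) (le_max_left (T+1) c2)
    have hTb0 : 0 ≤ Tb := le_trans hc10 (le_trans hc1c2 hc2Tb)
    have hmidreg : ∀ t : ℝ, |x| < (1 - t/2)^2 →
        peakon t x = -x / (1 - t/2) ∧ pkV t x = -x / (2 * (1 - t/2)^2) := by
      intro t h
      have h1 : -(1 - t/2)^2 ≤ x := by linarith [neg_abs_le x]
      have h2 : x ≤ (1 - t/2)^2 := le_trans (le_abs_self x) h.le
      exact ⟨peakon_mid h1 h2, pkV_mid h1 h2⟩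
    have hdmid : ∀ t : ℝ, |x| < (1 - t/2)^2 → HasDerivAt H (D t) t := by
      intro t hlt
      have hne : (1 - t/2) ≠ 0 := by
        intro h
        rw [h] at hlt
        simp at hlt
        nlinarith [abs_nonneg x]
      have hden : HasDerivAt (fun τ : ℝ => 1 - τ/2) (-(1/2)) t := by
        simpa using ((hasDerivAt_id t).div_const 2).const_sub 1
      have hu := (hasDerivAt_const t (-x)).div hden hne
      have hopen : IsOpen {τ : ℝ | |x| < (1 - τ/2)^2} := isOpen_lt continuous_const (by fun_prop)
      have hev : H =ᶠ[nhds t] fun τ => φ (τ, x) * (-x / (1 - τ/2)) := by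
        filter_upwards [hopen.mem_nhds hlt] with τ hτ
        simp only [hH]
        rw [(hmidreg τ hτ).1]
      have h2 := ((hasDerivAt_phi_t hφ t x).mul hu).congr_of_eventuallyEq hev
      refine h2.congr_deriv (Eq.symm ?_)
      simp only [hD]
      rw [(hmidreg t hlt).1, (hmidreg t hlt).2, mul_comm (2:ℝ) ((1 - t/2)^2),
        div_mul_eq_div_div]
      simp only [Pi.div_apply]
      ring
    have houter : ∀ t ∈ Ioo c1 c2, (1 - t/2)^2 < |x| := by
      intro t ht'
      have h1 : 2 - 2*r < t := lt_of_le_of_lt (by rw [hc1]; exact le_max_right _ _) ht'.1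
      have h2 : t < 2 + 2*r := by rw [hc2] at ht'; exact ht'.2
      have ha1 : -r < 1 - t/2 := by linarith
      have ha2 : 1 - t/2 < r := by linarith
      calc (1 - t/2)^2 < r^2 := sq_lt_sq' ha1 ha2
        _ = |x| := hr2
    have hdout : ∀ t ∈ Ioo c1 c2, HasDerivAt H (D t) t := by
      intro t ht'
      have hlt := houter t ht'
      have hopen : IsOpen {τ : ℝ | (1 - τ/2)^2 < |x|} := isOpen_lt (by fun_prop) continuous_const
      rcases hx0.lt_or_gt with hneg | hpos
      · have hreg : ∀ τ : ℝ, (1 - τ/2)^2 < |x| → x < -(1 - τ/2)^2 := by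
          intro τ hτ
          rw [abs_of_neg hneg] at hτ
          linarith
        have hev : H =ᶠ[nhds t] fun τ => φ (τ, x) * (1 - τ/2) := by
          filter_upwards [hopen.mem_nhds hlt] with τ hτ
          simp only [hH]
          rw [peakon_left (hreg τ hτ)]
        have hu : HasDerivAt (fun τ : ℝ => 1 - τ/2) (-(1/2)) t := by
          simpa using ((hasDerivAt_id t).div_const 2).const_sub 1
        have h2 := ((hasDerivAt_phi_t hφ t x).mul hu).congr_of_eventuallyEq hev
        refine h2.congr_deriv (Eq.symm ?_)
        simp only [hD]
        rw [peakon_left (hreg t hlt), pkV_left (hreg t hlt)]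
      · have hreg : ∀ τ : ℝ, (1 - τ/2)^2 < |x| → (1 - τ/2)^2 < x := by
          intro τ hτ
          rwa [abs_of_pos hpos] at hτ
        have hev : H =ᶠ[nhds t] fun τ => φ (τ, x) * (-1 + τ/2) := by
          filter_upwards [hopen.mem_nhds hlt] with τ hτ
          simp only [hH]
          rw [peakon_right (hreg τ hτ)]
        have hu : HasDerivAt (fun τ : ℝ => -1 + τ/2) (1/2) t := by
          simpa using ((hasDerivAt_id t).div_const 2).const_add (-1)
        have h2 := ((hasDerivAt_phi_t hφ t x).mul hu).congr_of_eventuallyEq hev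
        refine h2.congr_deriv (Eq.symm ?_)
        simp only [hD]
        rw [peakon_right (hreg t hlt), pkV_right (hreg t hlt)]
    have hdin1 : ∀ t ∈ Ioo 0 c1, HasDerivAt H (D t) t := by
      intro t ht'
      apply hdmid
      have hcle : c1 = 0 ∨ c1 ≤ 2 - 2*r := by
        rcases max_cases 0 (2 - 2*r) with ⟨he, _⟩ | ⟨he, _⟩
        · left; rw [hc1, he]
        · right; rw [hc1, he]
      have h1 : t < 2 - 2*r := by
        rcases hcle with h | h
        · exfalso; have := ht'.2; rw [h] at this; linarith [ht'.1]
        · linarith [ht'.2]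
      have h2 : r < 1 - t/2 := by linarith [ht'.1]
      rw [← hr2]
      exact sq_lt_sq' (by linarith) h2
    have hdin3 : ∀ t ∈ Ioo c2 Tb, HasDerivAt H (D t) t := by
      intro t ht'
      apply hdmid
      have h1 : 2 + 2*r < t := by rw [hc2] at ht'; exact ht'.1
      have h2 : r < -(1 - t/2) := by linarith
      rw [← hr2]
      have := sq_lt_sq' (by linarith : -(-(1 - t/2)) < r) h2
      rwa [neg_sq] at this
    have hkey : ∀ b c : ℝ, b ≤ c → (∀ τ ∈ Ioo b c, HasDerivAt H (D τ) τ) →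
        ∫ τ in b..c, D τ = H c - H b := fun b c hbc hd =>
      intervalIntegral.integral_eq_sub_of_hasDeriv_right_of_le hbc hHcont.continuousOn
        (fun τ hτ => (hd τ hτ).hasDerivWithinAt) hDint.intervalIntegrable
    have e1 := hkey 0 c1 hc10 hdin1
    have e2 := hkey c1 c2 hc1c2 hdout
    have e3 := hkey c2 Tb hc2Tb hdin3
    have i1 : IntervalIntegrable D volume 0 c1 := hDint.intervalIntegrable
    have i2 : IntervalIntegrable D volume c1 c2 := hDint.intervalIntegrable
    have i3 : IntervalIntegrable D volume c2 Tb := hDint.intervalIntegrable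
    have h12 := intervalIntegral.integral_add_adjacent_intervals i1 i2
    have h123 := intervalIntegral.integral_add_adjacent_intervals (i1.trans i2) i3
    have hHTb : H Tb = 0 := by
      simp only [hH]
      rw [(hzero Tb (by
        rw [abs_of_nonneg hTb0]
        exact hTTb)).1]
      ring
    have hDzero2 : ∀ τ ∈ Ioi (0:ℝ) \ Ioc 0 Tb, D τ = 0 := by
      intro τ hτ
      have h1 : Tb < τ := by
        rcases hτ with ⟨h1, h2⟩
        rw [mem_Ioc] at h2
        push_neg at h2
        exact h2 h1
      obtain ⟨hz1, hz2⟩ := hzero τ (by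
        rw [abs_of_pos (lt_of_le_of_lt hTb0 h1)]
        exact lt_trans hTTb h1)
      rw [hD]; simp only [hz1, hz2]; simp
    calc ∫ τ in Ioi (0:ℝ), D τ = ∫ τ in Ioc 0 Tb, D τ :=
          setIntegral_eq_of_subset_of_forall_diff_eq_zero measurableSet_Ioi
            Ioc_subset_Ioi_self hDzero2
      _ = ∫ τ in (0:ℝ)..Tb, D τ := (intervalIntegral.integral_of_le hTb0).symm
      _ = H Tb - H 0 := by rw [← h123, ← h12, e1, e2, e3]; ring
      _ = -(φ (0, x) * peakon 0 x) := by rw [hHTb, hH]; ring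

end Step2

/-- The conservative peakon satisfies the weak form of
`u_t + u u_x = F/2 - F_∞/4` (here `F_∞ = 2`) on `[0,∞) × ℝ`. -/
theorem peakon_weak_solution_u
    (φ : ℝ × ℝ → ℝ) (hφ : ContDiff ℝ (⊤ : ℕ∞) φ) (hφc : HasCompactSupport φ) :
    (∫ t in Set.Ioi (0 : ℝ), ∫ x : ℝ,
        (fderiv ℝ φ (t, x)) (1, 0) * peakon t x
          + (fderiv ℝ φ (t, x)) (0, 1) * (peakon t x) ^ 2 / 2
          + φ (t, x) * (peakonF t x / 2 - 1/2))
      + (∫ x : ℝ, φ (0, x) * peakon 0 x) = 0 := by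
  obtain ⟨T, M0, M1, hT, hM0, hM1, hsupp, hb0, hb1⟩ := phi_bounds hφ hφc
  have hzero : ∀ p : ℝ × ℝ, T < |p.1| ∨ T < |p.2| → φ p = 0 ∧ fderiv ℝ φ p = 0 := by
    intro p hp
    refine hsupp p ?_
    intro hmem
    have h1 := hmem.1
    have h2 := hmem.2
    rw [mem_Icc] at h1 h2
    rcases hp with h | h
    · have : |p.1| ≤ T := abs_le.mpr h1
      linarith
    · have : |p.2| ≤ T := abs_le.mpr h2
      linarith
  -- integrability in x for fixed t, of the two pieces
  have hintA : ∀ t : ℝ, Integrable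
      (fun x => (fderiv ℝ φ (t, x)) (1, 0) * peakon t x + φ (t, x) * pkV t x) := by
    intro t
    have hpc : Continuous fun x : ℝ => peakon t x :=
      continuous_peakon.comp (continuous_const.prodMk continuous_id)
    have hφc1 : Continuous fun x : ℝ => φ (t, x) :=
      hφ.continuous.comp (continuous_const.prodMk continuous_id)
    have hfc1 : Continuous fun x : ℝ => (fderiv ℝ φ (t, x)) (1, 0) :=
      ((hφ.continuous_fderiv (by simp)).clm_apply continuous_const).comp
        (continuous_const.prodMk continuous_id)
    refine integrable_aux ((hfc1.mul hpc).measurable.add (hφc1.measurable.mul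
      (measurable_pkV2.comp (measurable_const.prodMk measurable_id)))).aestronglyMeasurable
      (M1 * |1 - t/2| + M0 * (1/2)) T ?_ ?_
    · intro y
      have h1 : |(fderiv ℝ φ (t, y)) (1, 0)| ≤ M1 := by
        have := hb1 (t, y) (1, 0)
        rwa [norm10, mul_one] at this
      have h2 := peakon_abs_le t y
      have h3 := pkV_abs_le t y
      have h4 := hb0 (t, y)
      have e1 : |(fderiv ℝ φ (t, y)) (1, 0) * peakon t y| ≤ M1 * |1 - t/2| := by
        rw [abs_mul]; exact mul_le_mul h1 h2 (abs_nonneg _) hM1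
      have e2 : |φ (t, y) * pkV t y| ≤ M0 * (1/2) := by
        rw [abs_mul]; exact mul_le_mul h4 h3 (abs_nonneg _) hM0
      calc |(fderiv ℝ φ (t, y)) (1, 0) * peakon t y + φ (t, y) * pkV t y|
          ≤ |(fderiv ℝ φ (t, y)) (1, 0) * peakon t y| + |φ (t, y) * pkV t y| := abs_add_le _ _
        _ ≤ M1 * |1 - t/2| + M0 * (1/2) := by linarith
    · intro y hy
      have hay : T < |y| := by
        rw [mem_Icc] at hy; push_neg at hy
        rcases le_or_gt (-T) y with h | h
        · exact lt_of_lt_of_le (hy h) (le_abs_self y)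
        · calc T < -y := by linarith
            _ ≤ |y| := neg_le_abs y
      obtain ⟨hz1, hz2⟩ := hzero (t, y) (Or.inr hay)
      simp only [hz1, hz2]; simp
  have hintB : ∀ t : ℝ, Integrable
      (fun x => (fderiv ℝ φ (t, x)) (0, 1) * (peakon t x) ^ 2 / 2 + φ (t, x) * pkW t x) := by
    intro t
    have hpc : Continuous fun x : ℝ => peakon t x :=
      continuous_peakon.comp (continuous_const.prodMk continuous_id)
    have hφc1 : Continuous fun x : ℝ => φ (t, x) :=
      hφ.continuous.comp (continuous_const.prodMk continuous_id)
    have hfc1 : Continuous fun x : ℝ => (fderiv ℝ φ (t, x)) (0, 1) :=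
      ((hφ.continuous_fderiv (by simp)).clm_apply continuous_const).comp
        (continuous_const.prodMk continuous_id)
    refine integrable_aux (((hfc1.mul (hpc.pow 2)).div_const 2).measurable.add
      (hφc1.measurable.mul (measurable_pkW2.comp
        (measurable_const.prodMk measurable_id)))).aestronglyMeasurable
      (M1 * (1 - t/2)^2 / 2 + M0) T ?_ ?_
    · intro y
      have h1 : |(fderiv ℝ φ (t, y)) (0, 1)| ≤ M1 := by
        have := hb1 (t, y) (0, 1)
        rwa [norm01, mul_one] at this
      have h2 : (peakon t y)^2 ≤ (1 - t/2)^2 := by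
        have h := peakon_abs_le t y
        calc (peakon t y)^2 = |peakon t y|^2 := (sq_abs _).symm
          _ ≤ |1 - t/2|^2 := by nlinarith [abs_nonneg (peakon t y)]
          _ = (1 - t/2)^2 := sq_abs _
      have h3 := pkW_abs_le t y
      have h4 := hb0 (t, y)
      have e1 : |(fderiv ℝ φ (t, y)) (0, 1) * (peakon t y)^2 / 2| ≤ M1 * (1 - t/2)^2 / 2 := by
        rw [abs_div, abs_mul, abs_of_nonneg (sq_nonneg (peakon t y)),
          abs_of_nonneg (by norm_num : (0:ℝ) ≤ 2)]
        have := mul_le_mul h1 h2 (sq_nonneg _) hM1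
        linarith
      have e2 : |φ (t, y) * pkW t y| ≤ M0 := by
        rw [abs_mul]
        have := mul_le_mul h4 h3 (abs_nonneg _) hM0
        linarith
      calc |(fderiv ℝ φ (t, y)) (0, 1) * (peakon t y) ^ 2 / 2 + φ (t, y) * pkW t y|
          ≤ |(fderiv ℝ φ (t, y)) (0, 1) * (peakon t y) ^ 2 / 2| + |φ (t, y) * pkW t y| :=
            abs_add_le _ _
        _ ≤ M1 * (1 - t/2)^2 / 2 + M0 := by linarith
    · intro y hy
      have hay : T < |y| := by
        rw [mem_Icc] at hy; push_neg at hy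
        rcases le_or_gt (-T) y with h | h
        · exact lt_of_lt_of_le (hy h) (le_abs_self y)
        · calc T < -y := by linarith
            _ ≤ |y| := neg_le_abs y
      obtain ⟨hz1, hz2⟩ := hzero (t, y) (Or.inr hay)
      simp only [hz1, hz2]; simp
  -- pointwise-in-t identity for t ≠ 2
  have hinner : ∀ t : ℝ, (1 - t/2) ≠ 0 →
      (∫ x : ℝ, ((fderiv ℝ φ (t, x)) (1, 0) * peakon t x
          + (fderiv ℝ φ (t, x)) (0, 1) * (peakon t x) ^ 2 / 2
          + φ (t, x) * (peakonF t x / 2 - 1/2)))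
      = ∫ x : ℝ, ((fderiv ℝ φ (t, x)) (1, 0) * peakon t x + φ (t, x) * pkV t x) := by
    intro t ht
    have hpt : (fun x : ℝ => (fderiv ℝ φ (t, x)) (1, 0) * peakon t x
        + (fderiv ℝ φ (t, x)) (0, 1) * (peakon t x) ^ 2 / 2
        + φ (t, x) * (peakonF t x / 2 - 1/2))
        = fun x : ℝ => ((fderiv ℝ φ (t, x)) (1, 0) * peakon t x + φ (t, x) * pkV t x)
          + ((fderiv ℝ φ (t, x)) (0, 1) * (peakon t x) ^ 2 / 2 + φ (t, x) * pkW t x) := by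
      funext x
      rw [Fhalf ht x]
      ring
    rw [hpt, integral_add (hintA t) (hintB t), step1 hφ hφc ht, add_zero]
  have hae : ∀ᵐ t ∂(volume.restrict (Ioi (0:ℝ))), (1 - t/2) ≠ 0 := by
    apply ae_restrict_of_ae
    rw [ae_iff]
    have hset : {t : ℝ | ¬ (1 - t/2) ≠ 0} = {2} := by
      ext τ
      simp only [mem_setOf_eq, not_not, mem_singleton_iff]
      constructor <;> intro h <;> linarith
    rw [hset]
    exact Real.volume_singleton
  have hcongr : ∀ᵐ t ∂(volume.restrict (Ioi (0:ℝ))),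
      (∫ x : ℝ, ((fderiv ℝ φ (t, x)) (1, 0) * peakon t x
          + (fderiv ℝ φ (t, x)) (0, 1) * (peakon t x) ^ 2 / 2
          + φ (t, x) * (peakonF t x / 2 - 1/2)))
      = ∫ x : ℝ, ((fderiv ℝ φ (t, x)) (1, 0) * peakon t x + φ (t, x) * pkV t x) :=
    hae.mono fun t ht => hinner t ht
  rw [integral_congr_ae hcongr]
  have hprod : Integrable (Function.uncurry fun t x =>
      (fderiv ℝ φ (t, x)) (1, 0) * peakon t x + φ (t, x) * pkV t x)
      ((volume.restrict (Ioi (0:ℝ))).prod volume) := by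
    have huncurry : (Function.uncurry fun t x =>
        (fderiv ℝ φ (t, x)) (1, 0) * peakon t x + φ (t, x) * pkV t x)
        = fun p : ℝ × ℝ => (fderiv ℝ φ p) (1, 0) * peakon p.1 p.2 + φ p * pkV p.1 p.2 := rfl
    rw [huncurry]
    refine integrable_prod_aux ?_ (M1 * (1 + T/2) + M0 * (1/2)) T ?_ ?_
    · exact ((((hφ.continuous_fderiv (by simp)).clm_apply continuous_const).measurable.mul
        continuous_peakon.measurable).add
        (hφ.continuous.measurable.mul measurable_pkV2)).aestronglyMeasurable
    · intro p
      rcases le_or_gt (|p.1|) T with h | h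
      · have h1 : |(fderiv ℝ φ p) (1, 0)| ≤ M1 := by
          have := hb1 p (1, 0)
          rwa [norm10, mul_one] at this
        have h2 : |peakon p.1 p.2| ≤ 1 + T/2 := by
          refine (peakon_abs_le p.1 p.2).trans ?_
          rw [abs_le] at h ⊢
          constructor <;> [linarith [h.1, h.2]; linarith [h.1, h.2]]
        have h3 := pkV_abs_le p.1 p.2
        have h4 := hb0 p
        have e1 : |(fderiv ℝ φ p) (1, 0) * peakon p.1 p.2| ≤ M1 * (1 + T/2) := by
          rw [abs_mul]; exact mul_le_mul h1 h2 (abs_nonneg _) hM1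
        have e2 : |φ p * pkV p.1 p.2| ≤ M0 * (1/2) := by
          rw [abs_mul]; exact mul_le_mul h4 h3 (abs_nonneg _) hM0
        calc |(fderiv ℝ φ p) (1, 0) * peakon p.1 p.2 + φ p * pkV p.1 p.2|
            ≤ |(fderiv ℝ φ p) (1, 0) * peakon p.1 p.2| + |φ p * pkV p.1 p.2| := abs_add_le _ _
          _ ≤ M1 * (1 + T/2) + M0 * (1/2) := by linarith
      · obtain ⟨hz1, hz2⟩ := hzero p (Or.inl h)
        rw [hz1, hz2]
        simp
        positivity
    · intro p hp
      have : T < |p.1| ∨ T < |p.2| := by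
        rw [mem_prod] at hp
        push_neg at hp
        rcases le_or_gt (|p.1|) T with h | h
        · right
          have h1 : p.1 ∈ Icc (-T) T := mem_Icc.mpr (abs_le.mp h)
          have h2 := hp h1
          rw [mem_Icc] at h2
          push_neg at h2
          rcases le_or_gt (-T) p.2 with hh | hh
          · exact lt_of_lt_of_le (h2 hh) (le_abs_self _)
          · calc T < -p.2 := by linarith
              _ ≤ |p.2| := neg_le_abs _
        · exact Or.inl h
      obtain ⟨hz1, hz2⟩ := hzero p this
      rw [hz1, hz2]
      simp
  rw [MeasureTheory.integral_integral_swap hprod]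
  have hstep2 : (∫ x : ℝ, ∫ t in Ioi (0:ℝ),
      ((fderiv ℝ φ (t, x)) (1, 0) * peakon t x + φ (t, x) * pkV t x))
      = ∫ x : ℝ, -(φ (0, x) * peakon 0 x) :=
    integral_congr_ae (Filter.Eventually.of_forall fun x => step2 hφ hφc x)
  rw [hstep2, integral_neg]
  ring

end PeakonAux
end

section
/- Define u : [0,∞) × ℝ → ℝ by u(t,x) = 1 − t/2 for x < −(1−t/2)², u(t,x) = −x/(1−t/2) for −(1−t/2)² ≤ x ≤ (1−t/2)² and t ≠ 2, u(t,x) = −1 + t/2 for x > (1−t/2)², and u(2,x) = 0; define g : [0,∞) × ℝ → ℝ by g(t,x) = (1−t/2)^{−2} if t ≠ 2 and −(1−t/2)² < x < (1−t/2)², and g(t,x) = 0 otherwise. Then for every smooth compactly supported test function φ on [0,∞) × ℝ, ∫_0^∞ ∫_ℝ [ φ_t(t,x) + u(t,x)·φ_x(t,x) ]·g(t,x) dx dt + ∫_ℝ φ(0,x)·g(0,x) dx = 0. -/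
open MeasureTheory

open Classical in
/-- The density of the energy measure of the conservative peakon for `t ≠ 2`:
`g(t,x) = (1-t/2)⁻²` if `t ≠ 2` and `-(1-t/2)² < x < (1-t/2)²`, and `0` otherwise. -/
noncomputable def peakonG (t x : ℝ) : ℝ :=
  if t ≠ 2 ∧ -(1 - t/2)^2 < x ∧ x < (1 - t/2)^2 then 1 / (1 - t/2)^2 else 0

open Set Filter Function

/-- Chain rule for `t ↦ φ (t, (1-t/2)² y)`. -/
lemma peakon_aux_hasDerivAt (φ : ℝ × ℝ → ℝ) (hφ : ContDiff ℝ (⊤ : ℕ∞) φ) (y t : ℝ) :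
    HasDerivAt (fun t => φ (t, (1 - t/2)^2 * y))
      ((fderiv ℝ φ (t, (1 - t/2)^2 * y)) (1, -(1 - t/2) * y)) t := by
  have hs : HasDerivAt (fun t : ℝ => 1 - t/2) (-(1/2)) t := by
    simpa using ((hasDerivAt_id t).div_const 2).const_sub 1
  have h1 : HasDerivAt (fun t : ℝ => (1 - t/2)^2 * y) (-(1 - t/2) * y) t := by
    have h2 := (hs.pow 2).mul_const y
    refine h2.congr_deriv ?_
    ring
  have hcurve : HasDerivAt (fun t : ℝ => ((t, (1 - t/2)^2 * y) : ℝ × ℝ))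
      (1, -(1 - t/2) * y) t := (hasDerivAt_id t).prodMk h1
  exact (((hφ.differentiable (by simp)) _).hasFDerivAt).comp_hasDerivAt t hcurve

/-- Linearity of the Fréchet derivative over the basis `(1,0)`, `(0,1)` of `ℝ × ℝ`. -/
lemma peakon_aux_lin (φ : ℝ × ℝ → ℝ) (p : ℝ × ℝ) (v : ℝ) :
    (fderiv ℝ φ p) (1, v) = (fderiv ℝ φ p) (1, 0) + v * (fderiv ℝ φ p) (0, 1) := by
  have h : ((1 : ℝ), v) = ((1 : ℝ), (0 : ℝ)) + v • ((0 : ℝ), (1 : ℝ)) := by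
    simp [Prod.ext_iff]
  rw [h, map_add, ContinuousLinearMap.map_smul, smul_eq_mul]

/-- The conservative peakon satisfies the weak form of the energy transport equation
`F_t + u F_x = 0` on `[0,∞) × ℝ`. -/
theorem peakon_weak_solution_F
    (φ : ℝ × ℝ → ℝ) (hφ : ContDiff ℝ (⊤ : ℕ∞) φ) (hφc : HasCompactSupport φ) :
    (∫ t in Set.Ioi (0 : ℝ), ∫ x : ℝ,
        ((fderiv ℝ φ (t, x)) (1, 0) + peakon t x * (fderiv ℝ φ (t, x)) (0, 1))
          * peakonG t x)
      + (∫ x : ℝ, φ (0, x) * peakonG 0 x) = 0 := by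
  classical
  -- the transported integrand
  set f : ℝ → ℝ → ℝ :=
    fun t y => (fderiv ℝ φ (t, (1 - t/2)^2 * y)) (1, -(1 - t/2) * y) with hfdef
  -- continuity of f
  have hDc : Continuous (fderiv ℝ φ) := hφ.continuous_fderiv (by simp)
  have hfc : Continuous (uncurry f) := by
    apply Continuous.clm_apply
    · exact hDc.comp (by fun_prop)
    · fun_prop
  -- a bound on the support
  obtain ⟨T, hT, hTs⟩ : ∃ T : ℝ, 0 < T ∧ tsupport φ ⊆ Metric.closedBall 0 T :=
    hφc.isBounded.subset_closedBall_lt 0 0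
  have hout : ∀ p : ℝ × ℝ, T < p.1 → fderiv ℝ φ p = 0 := by
    intro p hp
    by_contra h
    have hmem : p ∈ tsupport φ := support_fderiv_subset ℝ (by simpa [Function.mem_support] using h)
    have := mem_closedBall_zero_iff.mp (hTs hmem)
    have h1 : |p.1| ≤ ‖p‖ := norm_fst_le p
    rw [abs_le] at h1
    linarith [h1.2, this, (norm_fst_le p).trans this]
  have houtφ : ∀ p : ℝ × ℝ, T < p.1 → φ p = 0 := by
    intro p hp
    apply image_eq_zero_of_notMem_tsupport
    intro hmem
    have := mem_closedBall_zero_iff.mp (hTs hmem)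
    have h1 : |p.1| ≤ ‖p‖ := norm_fst_le p
    rw [abs_le] at h1
    linarith [h1.2]
  -- integrability of f (·, y) on (0, ∞)
  have hIoi : Ioi (0:ℝ) = Ioc 0 T ∪ Ioi T := (Ioc_union_Ioi_eq_Ioi hT.le).symm
  have hfi : ∀ y : ℝ, IntegrableOn (fun t => f t y) (Ioi (0:ℝ)) := by
    intro y
    rw [hIoi]
    apply IntegrableOn.union
    · exact (hfc.comp (continuous_id.prodMk continuous_const)).integrableOn_Ioc
    · apply (integrableOn_congr_fun (g := fun _ => (0:ℝ)) ?_ measurableSet_Ioi).mpr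
        (integrableOn_zero)
      intro t ht
      simp [hfdef, hout (t, (1 - t/2)^2 * y) ht]
  -- FTC in the t-variable
  have hFTC : ∀ y : ℝ, (∫ t in Ioi (0:ℝ), f t y) = -φ (0, y) := by
    intro y
    have h0 : (∫ t in Ioi (0:ℝ), f t y) = 0 - φ (0, (1 - 0/2)^2 * y) := by
      refine integral_Ioi_of_hasDerivAt_of_tendsto
        (f := fun t => φ (t, (1 - t/2)^2 * y)) (f' := fun t => f t y) ?_ ?_ ?_ ?_
      · exact (hφ.continuous.comp (by fun_prop)).continuousWithinAt
      · intro t _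
        exact peakon_aux_hasDerivAt φ hφ y t
      · exact hfi y
      · apply Tendsto.congr' ?_ tendsto_const_nhds
        filter_upwards [eventually_gt_atTop T] with t ht
        exact (houtφ (t, (1 - t/2)^2 * y) ht).symm
    rw [h0]
    norm_num
  -- integrability on the product, for Fubini
  have hprod : IntegrableOn (uncurry f) (Ioi (0:ℝ) ×ˢ Ioo (-1:ℝ) 1) := by
    rw [hIoi, union_prod]
    apply IntegrableOn.union
    · exact (hfc.continuousOn.integrableOn_compact (isCompact_Icc.prod isCompact_Icc)).mono_set
        (prod_mono Ioc_subset_Icc_self Ioo_subset_Icc_self)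
    · apply (integrableOn_congr_fun (g := fun _ => (0:ℝ)) ?_
        (measurableSet_Ioi.prod measurableSet_Ioo)).mpr (integrableOn_zero)
      rintro ⟨t, y⟩ ⟨ht, -⟩
      simp [uncurry, hfdef, hout (t, (1 - t/2)^2 * y) ht]
  -- swap the order of integration
  have hswap : (∫ t in Ioi (0:ℝ), ∫ y in Ioo (-1:ℝ) 1, f t y)
      = ∫ y in Ioo (-1:ℝ) 1, ∫ t in Ioi (0:ℝ), f t y := by
    apply integral_integral_swap
    rw [Measure.prod_restrict, ← Measure.volume_eq_prod]
    exact hprod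
  -- rewrite the inner spatial integral via the change of variables x = (1-t/2)² y
  have hae : ∀ᵐ t : ℝ, t ∈ Ioi (0:ℝ) →
      (∫ x : ℝ, ((fderiv ℝ φ (t, x)) (1, 0) + peakon t x * (fderiv ℝ φ (t, x)) (0, 1))
          * peakonG t x)
        = ∫ y in Ioo (-1:ℝ) 1, f t y := by
    have h2 : ∀ᵐ t : ℝ, (t : ℝ) ≠ 2 := by
      rw [ae_iff]
      have : {t : ℝ | ¬ t ≠ 2} = {2} := by ext t; simp
      rw [this]
      exact measure_singleton 2
    filter_upwards [h2] with t ht2 _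
    set s : ℝ := 1 - t/2 with hsdef
    have hs : s ≠ 0 := by
      intro h
      apply ht2
      rw [hsdef] at h
      linarith [h]
    set c : ℝ := s^2 with hcdef
    have hc : 0 < c := by positivity
    -- the integrand vanishes outside Ioo (-c) c
    have hg0 : ∀ x : ℝ, x ∉ Ioo (-c) c → peakonG t x = 0 := by
      intro x hx
      rw [peakonG, if_neg]
      rintro ⟨-, h1, h3⟩
      exact hx ⟨h1, h3⟩
    have step1 : (∫ x : ℝ, ((fderiv ℝ φ (t, x)) (1, 0) + peakon t x * (fderiv ℝ φ (t, x)) (0, 1))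
          * peakonG t x)
        = ∫ x in Ioo (-c) c,
            ((fderiv ℝ φ (t, x)) (1, 0) + (-x / s) * (fderiv ℝ φ (t, x)) (0, 1)) * (1 / c) := by
      rw [← setIntegral_eq_integral_of_forall_compl_eq_zero
        (fun x hx => by rw [hg0 x hx, mul_zero])]
      apply setIntegral_congr_fun measurableSet_Ioo
      intro x hx
      dsimp only
      have hpk : peakon t x = -x / s := by
        rw [peakon, if_neg (by push_neg; exact le_of_lt hx.1), if_pos hx.2.le]
      have hpg : peakonG t x = 1 / c := by
        rw [peakonG, if_pos ⟨ht2, hx.1, hx.2⟩]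
      rw [hpk, hpg]
    -- change of variables
    have step2 : (∫ x in Ioo (-c) c,
          ((fderiv ℝ φ (t, x)) (1, 0) + (-x / s) * (fderiv ℝ φ (t, x)) (0, 1)) * (1 / c))
        = ∫ y in Ioo (-1:ℝ) 1, f t y := by
      set h : ℝ → ℝ := fun x =>
        ((fderiv ℝ φ (t, x)) (1, 0) + (-x / s) * (fderiv ℝ φ (t, x)) (0, 1)) * (1 / c)
        with hhdef
      have hscale := intervalIntegral.integral_comp_mul_left (a := (-1:ℝ)) (b := 1) h
        (ne_of_gt hc)
      rw [mul_neg_one, mul_one] at hscale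
      have e1 : (∫ x in Ioo (-c) c, h x) = ∫ x in (-c)..c, h x := by
        rw [intervalIntegral.integral_of_le (by linarith), integral_Ioc_eq_integral_Ioo]
      have e2 : (∫ y in Ioo (-1:ℝ) 1, f t y) = ∫ y in (-1:ℝ)..1, f t y := by
        rw [intervalIntegral.integral_of_le (by norm_num), integral_Ioc_eq_integral_Ioo]
      rw [e1, e2]
      have e3 : ∀ y : ℝ, f t y = c • h (c * y) := by
        intro y
        rw [hfdef]
        simp only [hhdef]
        rw [peakon_aux_lin φ (t, (1 - t/2)^2 * y) (-(1 - t/2) * y)]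
        have hc2 : c = s^2 := hcdef
        have : (1 - t/2) = s := hsdef.symm
        rw [this]
        have hcy : (1 - t/2)^2 * y = c * y := by rw [hcdef, hsdef]
        rw [hcy]
        rw [hc2]
        field_simp
        rw [smul_eq_mul, mul_div_assoc', mul_div_cancel_left₀ _ (pow_ne_zero 2 hs)]
      calc (∫ x in (-c)..c, h x) = c • ∫ y in (-1:ℝ)..1, h (c * y) := by
            rw [hscale, smul_smul, mul_inv_cancel₀ (ne_of_gt hc), one_smul]
        _ = ∫ y in (-1:ℝ)..1, c • h (c * y) := by
            rw [← intervalIntegral.integral_smul]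
        _ = ∫ y in (-1:ℝ)..1, f t y := by
            apply intervalIntegral.integral_congr
            intro y _
            exact (e3 y).symm
    rw [step1, step2]
  -- the initial-data term
  have hinit : (∫ x : ℝ, φ (0, x) * peakonG 0 x) = ∫ x in Ioo (-1:ℝ) 1, φ (0, x) := by
    have hg0 : ∀ x : ℝ, x ∉ Ioo (-1:ℝ) 1 → peakonG 0 x = 0 := by
      intro x hx
      rw [peakonG, if_neg]
      rintro ⟨-, h1, h3⟩
      apply hx
      constructor <;> [nlinarith; nlinarith]
    rw [← setIntegral_eq_integral_of_forall_compl_eq_zero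
      (fun x hx => by rw [hg0 x hx, mul_zero])]
    apply setIntegral_congr_fun measurableSet_Ioo
    intro x hx
    dsimp only
    have : peakonG 0 x = 1 := by
      rw [peakonG, if_pos]
      · norm_num
      · refine ⟨by norm_num, by norm_num [hx.1], by norm_num [hx.2]⟩
    rw [this, mul_one]
  -- put everything together
  rw [setIntegral_congr_ae measurableSet_Ioi hae, hswap, hinit]
  have : (∫ y in Ioo (-1:ℝ) 1, ∫ t in Ioi (0:ℝ), f t y)
      = ∫ y in Ioo (-1:ℝ) 1, -φ (0, y) := by
    apply setIntegral_congr_fun measurableSet_Ioo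
    intro y _
    exact hFTC y
  rw [this, integral_neg]
  ring
end

section
/- Let F_∞ = 8/3 and for t ≥ 0 and x ∈ (−1 + t − t²/3, 1 + t + t²/3) with x ≠ −(t/3)³ define u(t,x) = (x + (t/3)³)^{2/3} − t²/9 and F(t,x) = (4/3)(x + (t/3)³)^{1/3} + (4/3)(1 − t/3), where r^{1/3} denotes the real cube root and r^{2/3} its square. Then at every such point (t,x) the partial derivatives u_t, u_x, F_t, F_x exist and satisfy u_t + u·u_x = F/2 − F_∞/4 and F_t + u·F_x = 0. -/
/-!
Both `u` and `F` depend on `(t, x)` through `c = cbrt (x + (t/3)³)`, and off the cusp `c = 0`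
we have `∂ₓc = 1/(3c²)` and `∂ₜc = (t/3)²/(3c²)`. Substituting, `F_t + u F_x = (4/9)(c²/c²) - 4/9 = 0`
and `u_t + u u_x = 2c/3 - 2t/9 = F/2 - 2/3`.
-/

/-- The real cube root: `cbrt r = sign r * |r|^(1/3)`. -/
noncomputable def cbrt (r : ℝ) : ℝ := Real.sign r * |r| ^ ((1 : ℝ)/3)

/-- The cusp solution `u(t,x) = (x + (t/3)³)^{2/3} - t²/9`. -/
noncomputable def cuspU (t x : ℝ) : ℝ := (cbrt (x + (t/3)^3)) ^ 2 - t^2/9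

/-- The cumulative energy `F(t,x) = (4/3)(x + (t/3)³)^{1/3} + (4/3)(1 - t/3)`. -/
noncomputable def cuspF (t x : ℝ) : ℝ :=
  (4/3) * cbrt (x + (t/3)^3) + (4/3) * (1 - t/3)

open Real

lemma cbrt_neg (r : ℝ) : cbrt (-r) = -cbrt r := by
  simp [cbrt, Real.sign_neg]

lemma cbrt_of_pos {r : ℝ} (hr : 0 < r) : cbrt r = r ^ (1 / 3 : ℝ) := by
  simp [cbrt, Real.sign_of_pos hr, abs_of_pos hr]

lemma cbrt_ne_zero {r : ℝ} (hr : r ≠ 0) : cbrt r ≠ 0 :=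
  mul_ne_zero (Real.sign_eq_zero_iff.not.mpr hr) (rpow_pos_of_pos (abs_pos.mpr hr) _).ne'

lemma hasDerivAt_cbrt_of_pos {w : ℝ} (hw : 0 < w) :
    HasDerivAt cbrt (1 / (3 * cbrt w ^ 2)) w := by
  have hrpow : HasDerivAt (fun r : ℝ => r ^ (1 / 3 : ℝ)) (1 / 3 * w ^ (1 / 3 - 1 : ℝ)) w :=
    hasDerivAt_rpow_const (Or.inl hw.ne')
  have hderiv : 1 / (3 * cbrt w ^ 2) = 1 / 3 * w ^ (1 / 3 - 1 : ℝ) := by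
    rw [cbrt_of_pos hw, ← rpow_natCast, ← rpow_mul hw.le,
      show (1 / 3 - 1 : ℝ) = -(1 / 3 * (2 : ℕ)) by norm_num, rpow_neg hw.le]
    field_simp
  rw [hderiv]
  exact hrpow.congr_of_eventuallyEq <| (eventually_gt_nhds hw).mono fun r hr => cbrt_of_pos hr

lemma hasDerivAt_cbrt {w : ℝ} (hw : w ≠ 0) :
    HasDerivAt cbrt (1 / (3 * cbrt w ^ 2)) w := by
  rcases hw.lt_or_gt with hneg | hpos
  · have hodd : HasDerivAt (fun r => -cbrt (-r)) (-(1 / (3 * cbrt (-w) ^ 2) * -1)) w :=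
      ((hasDerivAt_cbrt_of_pos (neg_pos.mpr hneg)).comp w (hasDerivAt_neg w)).neg
    simpa [cbrt_neg] using hodd
  · exact hasDerivAt_cbrt_of_pos hpos

theorem HasDerivAt.cbrt {f : ℝ → ℝ} {f' a : ℝ} (hf : HasDerivAt f f' a) (ha : f a ≠ 0) :
    HasDerivAt (fun y => cbrt (f y)) (f' / (3 * cbrt (f a) ^ 2)) a :=
  ((hasDerivAt_cbrt ha).comp a hf).congr_deriv (by ring)

section CuspDerivatives

variable {t x : ℝ}

lemma hasDerivAt_cuspU_time (hw : x + (t / 3) ^ 3 ≠ 0) :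
    HasDerivAt (fun s => cuspU s x) (2 * t ^ 2 / (27 * cbrt (x + (t / 3) ^ 3)) - 2 * t / 9) t := by
  have hc := cbrt_ne_zero hw
  unfold cuspU
  refine (((((hasDerivAt_id t).div_const 3).pow 3).const_add x |>.cbrt hw).pow 2 |>.sub
    (((hasDerivAt_id t).pow 2).div_const 9)).congr_deriv ?_
  simp only [id, Pi.pow_apply]
  generalize cbrt (x + (t / 3) ^ 3) = c at hc ⊢
  field_simp
  ring

lemma hasDerivAt_cuspU_space (hw : x + (t / 3) ^ 3 ≠ 0) :
    HasDerivAt (fun y => cuspU t y) (2 / (3 * cbrt (x + (t / 3) ^ 3))) x := by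
  have hc := cbrt_ne_zero hw
  unfold cuspU
  refine (((hasDerivAt_id x).add_const ((t / 3) ^ 3) |>.cbrt hw).pow 2
    |>.sub_const (t ^ 2 / 9)).congr_deriv ?_
  simp only [id]
  generalize cbrt (x + (t / 3) ^ 3) = c at hc ⊢
  field_simp
  ring

lemma hasDerivAt_cuspF_time (hw : x + (t / 3) ^ 3 ≠ 0) :
    HasDerivAt (fun s => cuspF s x) (4 * t ^ 2 / (81 * cbrt (x + (t / 3) ^ 3) ^ 2) - 4 / 9) t := by
  have hc := cbrt_ne_zero hw
  unfold cuspF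
  refine ((((((hasDerivAt_id t).div_const 3).pow 3).const_add x |>.cbrt hw).const_mul (4 / 3)).add
    ((((hasDerivAt_id t).div_const 3).const_sub 1).const_mul (4 / 3))).congr_deriv ?_
  simp only [id, Pi.pow_apply]
  generalize cbrt (x + (t / 3) ^ 3) = c at hc ⊢
  field_simp
  ring

lemma hasDerivAt_cuspF_space (hw : x + (t / 3) ^ 3 ≠ 0) :
    HasDerivAt (fun y => cuspF t y) (4 / (9 * cbrt (x + (t / 3) ^ 3) ^ 2)) x := by
  have hc := cbrt_ne_zero hw
  unfold cuspF
  refine ((((hasDerivAt_id x).add_const ((t / 3) ^ 3) |>.cbrt hw).const_mul (4 / 3)).add_const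
    (4 / 3 * (1 - t / 3))).congr_deriv ?_
  simp only [id]
  generalize cbrt (x + (t / 3) ^ 3) = c at hc ⊢
  field_simp
  ring

end CuspDerivatives

theorem cusp_solves_HS_classically_general
    (t x : ℝ)
    (hx3 : x ≠ -(t/3)^3) :
    ∃ ut ux Ft Fx : ℝ,
      HasDerivAt (fun s => cuspU s x) ut t ∧
      HasDerivAt (fun y => cuspU t y) ux x ∧
      HasDerivAt (fun s => cuspF s x) Ft t ∧
      HasDerivAt (fun y => cuspF t y) Fx x ∧
      ut + cuspU t x * ux = cuspF t x / 2 - (8/3) / 4 ∧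
      Ft + cuspU t x * Fx = 0 := by
  have hw : x + (t / 3) ^ 3 ≠ 0 := fun h => hx3 (by linarith)
  have hc := cbrt_ne_zero hw
  refine ⟨_, _, _, _, hasDerivAt_cuspU_time hw, hasDerivAt_cuspU_space hw,
    hasDerivAt_cuspF_time hw, hasDerivAt_cuspF_space hw, ?_, ?_⟩ <;>
  · simp only [cuspU, cuspF]
    generalize cbrt (x + (t / 3) ^ 3) = c at hc ⊢
    field_simp
    ring

/-- Away from the moving cusp point `x = -(t/3)³`, the cusp solution solves the
Hunter–Saxton system `u_t + u u_x = F/2 - F_∞/4`, `F_t + u F_x = 0` classically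
(here `F_∞ = 8/3`). -/
theorem cusp_solves_HS_classically
    (t x : ℝ) (ht : 0 ≤ t)
    (hx1 : -1 + t - t^2/3 < x) (hx2 : x < 1 + t + t^2/3)
    (hx3 : x ≠ -(t/3)^3) :
    ∃ ut ux Ft Fx : ℝ,
      HasDerivAt (fun s => cuspU s x) ut t ∧
      HasDerivAt (fun y => cuspU t y) ux x ∧
      HasDerivAt (fun s => cuspF s x) Ft t ∧
      HasDerivAt (fun y => cuspF t y) Fx x ∧
      ut + cuspU t x * ux = cuspF t x / 2 - (8/3) / 4 ∧
      Ft + cuspU t x * Fx = 0 :=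
  cusp_solves_HS_classically_general t x hx3
end

section
/- Let F_∞ ∈ ℝ, let x_L^0 < x_R^0, u_L^0, u_R^0, F_L, F_R be real numbers, and define for t ∈ ℝ: x_L(t) = x_L^0 + u_L^0 t + (1/4)(F_L − F_∞/2)t², x_R(t) = x_R^0 + u_R^0 t + (1/4)(F_R − F_∞/2)t², u_L(t) = u_L^0 + (1/2)(F_L − F_∞/2)t, u_R(t) = u_R^0 + (1/2)(F_R − F_∞/2)t. Let I ⊆ ℝ be an open interval containing 0 on which x_L(t) < x_R(t), and on the open set D = {(t,x) : t ∈ I, x_L(t) < x < x_R(t)} define u(t,x) = u_L(t) + (x − x_L(t))·(u_R(t) − u_L(t))/(x_R(t) − x_L(t)) and F(t,x) = F_L + (x − x_L(t))·(F_R − F_L)/(x_R(t) − x_L(t)). Then u and F are differentiable on D and satisfy u_t + u·u_x = F/2 − F_∞/4 and F_t + u·F_x = 0 at every point of D. -/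
/-- Inside a cell bounded by the characteristics `x_L(t) < x_R(t)` the piecewise linear
prescription — breakpoints moving along characteristics, values evolving by the
characteristic equations and linear interpolation in between — solves the Hunter–Saxton
system `u_t + u u_x = F/2 - F_∞/4`, `F_t + u F_x = 0` classically. -/
theorem piecewise_linear_cell_solves_HS
    (Finf xL0 xR0 uL0 uR0 FL FR : ℝ) (hx0 : xL0 < xR0)
    (xL xR uL uR : ℝ → ℝ)
    (hxL : ∀ t, xL t = xL0 + uL0 * t + (1/4) * (FL - Finf/2) * t^2)
    (hxR : ∀ t, xR t = xR0 + uR0 * t + (1/4) * (FR - Finf/2) * t^2)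
    (huL : ∀ t, uL t = uL0 + (1/2) * (FL - Finf/2) * t)
    (huR : ∀ t, uR t = uR0 + (1/2) * (FR - Finf/2) * t)
    (I : Set ℝ) (hIopen : IsOpen I) (hIconn : I.OrdConnected) (hI0 : (0 : ℝ) ∈ I)
    (hIlt : ∀ t ∈ I, xL t < xR t)
    (u F : ℝ → ℝ → ℝ)
    (hu : ∀ t x, u t x = uL t + (x - xL t) * (uR t - uL t) / (xR t - xL t))
    (hF : ∀ t x, F t x = FL + (x - xL t) * (FR - FL) / (xR t - xL t)) :
    ∀ t ∈ I, ∀ x : ℝ, xL t < x → x < xR t →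
      DifferentiableAt ℝ (fun p : ℝ × ℝ => u p.1 p.2) (t, x) ∧
      DifferentiableAt ℝ (fun p : ℝ × ℝ => F p.1 p.2) (t, x) ∧
      ∃ ut ux Ft Fx : ℝ,
        HasDerivAt (fun s => u s x) ut t ∧
        HasDerivAt (fun y => u t y) ux x ∧
        HasDerivAt (fun s => F s x) Ft t ∧
        HasDerivAt (fun y => F t y) Fx x ∧
        ut + u t x * ux = F t x / 2 - Finf / 4 ∧
        Ft + u t x * Fx = 0 := by

  intro t ht x hxl hxr
  have hd : xR t - xL t ≠ 0 := sub_ne_zero.mpr (hIlt t ht).ne'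
  -- derivatives of the coefficient functions
  have hxL' : HasDerivAt xL (uL t) t := by
    have h : HasDerivAt (fun s => xL0 + uL0 * s + (1/4) * (FL - Finf/2) * s^2)
        (uL0 * 1 + (1/4) * (FL - Finf/2) * (↑2 * t ^ (2-1))) t :=
      (((hasDerivAt_id t).const_mul uL0).const_add xL0).add
        ((hasDerivAt_pow 2 t).const_mul ((1/4) * (FL - Finf/2)))
    have hf : xL = fun s => xL0 + uL0 * s + (1/4) * (FL - Finf/2) * s^2 := funext hxL
    rw [hf, huL]
    convert h using 1
    push_cast
    ring
  have hxR' : HasDerivAt xR (uR t) t := by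
    have h : HasDerivAt (fun s => xR0 + uR0 * s + (1/4) * (FR - Finf/2) * s^2)
        (uR0 * 1 + (1/4) * (FR - Finf/2) * (↑2 * t ^ (2-1))) t :=
      (((hasDerivAt_id t).const_mul uR0).const_add xR0).add
        ((hasDerivAt_pow 2 t).const_mul ((1/4) * (FR - Finf/2)))
    have hf : xR = fun s => xR0 + uR0 * s + (1/4) * (FR - Finf/2) * s^2 := funext hxR
    rw [hf, huR]
    convert h using 1
    push_cast
    ring
  have huL' : HasDerivAt uL ((1/2) * (FL - Finf/2)) t := by
    have h : HasDerivAt (fun s => uL0 + (1/2) * (FL - Finf/2) * s)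
        ((1/2) * (FL - Finf/2) * 1) t :=
      ((hasDerivAt_id t).const_mul ((1/2) * (FL - Finf/2))).const_add uL0
    have hf : uL = fun s => uL0 + (1/2) * (FL - Finf/2) * s := funext huL
    rw [hf]
    simpa using h
  have huR' : HasDerivAt uR ((1/2) * (FR - Finf/2)) t := by
    have h : HasDerivAt (fun s => uR0 + (1/2) * (FR - Finf/2) * s)
        ((1/2) * (FR - Finf/2) * 1) t :=
      ((hasDerivAt_id t).const_mul ((1/2) * (FR - Finf/2))).const_add uR0
    have hf : uR = fun s => uR0 + (1/2) * (FR - Finf/2) * s := funext huR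
    rw [hf]
    simpa using h
  -- differentiability of the two-variable maps
  have hxLd : DifferentiableAt ℝ (fun p : ℝ × ℝ => xL p.1) (t, x) := by
    have hf : (fun p : ℝ × ℝ => xL p.1)
        = fun p => xL0 + uL0 * p.1 + (1/4) * (FL - Finf/2) * p.1^2 :=
      funext fun p => hxL p.1
    rw [hf]; fun_prop
  have hxRd : DifferentiableAt ℝ (fun p : ℝ × ℝ => xR p.1) (t, x) := by
    have hf : (fun p : ℝ × ℝ => xR p.1)
        = fun p => xR0 + uR0 * p.1 + (1/4) * (FR - Finf/2) * p.1^2 :=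
      funext fun p => hxR p.1
    rw [hf]; fun_prop
  have huLd : DifferentiableAt ℝ (fun p : ℝ × ℝ => uL p.1) (t, x) := by
    have hf : (fun p : ℝ × ℝ => uL p.1)
        = fun p => uL0 + (1/2) * (FL - Finf/2) * p.1 := funext fun p => huL p.1
    rw [hf]; fun_prop
  have huRd : DifferentiableAt ℝ (fun p : ℝ × ℝ => uR p.1) (t, x) := by
    have hf : (fun p : ℝ × ℝ => uR p.1)
        = fun p => uR0 + (1/2) * (FR - Finf/2) * p.1 := funext fun p => huR p.1
    rw [hf]; fun_prop
  have hsnd : DifferentiableAt ℝ (fun p : ℝ × ℝ => p.2) (t, x) := differentiableAt_snd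
  have hDd : DifferentiableAt ℝ (fun p : ℝ × ℝ => xR p.1 - xL p.1) (t, x) := hxRd.sub hxLd
  refine ⟨?_, ?_, ?_⟩
  · have hf : (fun p : ℝ × ℝ => u p.1 p.2)
        = fun p => uL p.1 + (p.2 - xL p.1) * (uR p.1 - uL p.1) / (xR p.1 - xL p.1) :=
      funext fun p => hu p.1 p.2
    rw [hf]
    simp only [div_eq_mul_inv]
    exact huLd.add (((hsnd.sub hxLd).mul (huRd.sub huLd)).mul (hDd.inv hd))
  · have hf : (fun p : ℝ × ℝ => F p.1 p.2)
        = fun p => FL + (p.2 - xL p.1) * (FR - FL) / (xR p.1 - xL p.1) :=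
      funext fun p => hF p.1 p.2
    rw [hf]
    simp only [div_eq_mul_inv]
    exact (((hsnd.sub hxLd).mul_const (FR - FL)).mul (hDd.inv hd)).const_add FL
  · have hut : HasDerivAt (fun s => u s x)
        ((1/2) * (FL - Finf/2) +
          ((((0 - uL t) * (uR t - uL t) +
              (x - xL t) * ((1/2) * (FR - Finf/2) - (1/2) * (FL - Finf/2))) *
                (xR t - xL t) -
              (x - xL t) * (uR t - uL t) * (uR t - uL t)) / (xR t - xL t) ^ 2)) t := by
      have hf : (fun s => u s x)
          = fun s => uL s + (x - xL s) * (uR s - uL s) / (xR s - xL s) :=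
        funext fun s => hu s x
      rw [hf]
      exact huL'.add ((((hasDerivAt_const t x).sub hxL').mul (huR'.sub huL')).div
        (hxR'.sub hxL') hd)
    have hux : HasDerivAt (fun y => u t y)
        (1 * (uR t - uL t) / (xR t - xL t)) x := by
      have hf : (fun y => u t y)
          = fun y => uL t + (y - xL t) * (uR t - uL t) / (xR t - xL t) :=
        funext fun y => hu t y
      rw [hf]
      exact ((((hasDerivAt_id x).sub_const (xL t)).mul_const (uR t - uL t)).div_const
        (xR t - xL t)).const_add (uL t)
    have hFt : HasDerivAt (fun s => F s x)
        ((((0 - uL t) * (FR - FL)) * (xR t - xL t) -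
            (x - xL t) * (FR - FL) * (uR t - uL t)) / (xR t - xL t) ^ 2) t := by
      have hf : (fun s => F s x)
          = fun s => FL + (x - xL s) * (FR - FL) / (xR s - xL s) :=
        funext fun s => hF s x
      rw [hf]
      exact (((((hasDerivAt_const t x).sub hxL').mul_const (FR - FL)).div
        (hxR'.sub hxL') hd)).const_add FL
    have hFx : HasDerivAt (fun y => F t y)
        (1 * (FR - FL) / (xR t - xL t)) x := by
      have hf : (fun y => F t y)
          = fun y => FL + (y - xL t) * (FR - FL) / (xR t - xL t) :=
        funext fun y => hF t y
      rw [hf]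
      exact ((((hasDerivAt_id x).sub_const (xL t)).mul_const (FR - FL)).div_const
        (xR t - xL t)).const_add FL
    refine ⟨_, _, _, _, hut, hux, hFt, hFx, ?_, ?_⟩
    · rw [hu, hF]
      field_simp
      ring
    · rw [hu]
      field_simp
      ring
end
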